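/- arXiv:2209.12436 — 5 statements merged into one kernel-verified Lean document; each statement's English description precedes it below -/
import Mathlib

section
/- For all r ≥ 2 and k ≥ 1, the number of permutations π ∈ S_{rk+1} whose inverse is a 2134⋯(r+1)-cluster and which have exactly k-1 peaks equals ∏_{j=1}^{k-1} ((r-2)j + 2). -/
open scoped Classical

noncomputable section

/-- One-line notation (0-based positions and values) of a permutation of `Fin n`. -/
def ofPerm {n : ℕ} (π : Equiv.Perm (Fin n)) : ℕ → ℕ :=
  fun i => if h : i < n then (π ⟨i, h⟩ : ℕ) else 0

/-- Number of descents of a word of length `n`. -/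
def desNum (n : ℕ) (w : ℕ → ℕ) : ℕ :=
  ((Finset.range (n - 1)).filter (fun i => w (i + 1) < w i)).card

/-- Number of peaks of a word of length `n`. -/
def pkNum (n : ℕ) (w : ℕ → ℕ) : ℕ :=
  ((Finset.Ico 1 (n - 1)).filter (fun i => w (i - 1) < w i ∧ w (i + 1) < w i)).card

/-- Number of left peaks of a word of length `n`. -/
def lpkNum (n : ℕ) (w : ℕ → ℕ) : ℕ :=
  ((Finset.range (n - 1)).filter
    (fun i => (1 ≤ i ∧ w (i - 1) < w i ∧ w (i + 1) < w i) ∨ (i = 0 ∧ w 1 < w 0))).card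

/-- A word of length `r*k+1` is a `2134⋯(r+1)`-cluster: in each window of length `r+1`
starting at position `r*j` (`0 ≤ j ≤ k-1`), the second entry is smallest, the first entry
is second smallest, and the remaining entries increase. -/
def IsCluster (r k : ℕ) (w : ℕ → ℕ) : Prop :=
  ∀ j < k, w (r * j + 1) < w (r * j) ∧ w (r * j) < w (r * j + 2) ∧
    ∀ l, 2 ≤ l → l < r → w (r * j + l) < w (r * j + l + 1)

/-- Permutations of `S_{rk+1}` whose inverse is a `2134⋯(r+1)`-cluster. -/
def clusterSet (r k : ℕ) : Finset (Equiv.Perm (Fin (r * k + 1))) :=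
  Finset.univ.filter (fun π => IsCluster r k (ofPerm π⁻¹))

namespace Stmt10

/-- `p` is a valley position. -/
def Vly (r k p : ℕ) : Prop := ∃ j, j < k ∧ p = r * j + 1

lemma vly_iff {r k p : ℕ} (hr : 2 ≤ r) (hp : p < r * k + 1) :
    Vly r k p ↔ p % r = 1 := by
  constructor
  · rintro ⟨j, hj, rfl⟩
    simp [Nat.mul_add_mod, Nat.mod_eq_of_lt (show 1 < r by omega)]
  · intro h
    have hdm := Nat.div_add_mod p r
    refine ⟨p / r, ?_, by omega⟩
    rcases Nat.lt_or_ge (p / r) k with h' | h'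
    · exact h'
    · exfalso
      have h1 : r * k ≤ r * (p / r) := Nat.mul_le_mul_left r h'
      omega

lemma not_vly_two {r k j : ℕ} (hr : 2 ≤ r) : ¬ Vly r k (r * j + 2) := by
  rintro ⟨j', hj', he⟩
  rcases Nat.lt_trichotomy j j' with h | h | h
  · have : r * (j + 1) ≤ r * j' := Nat.mul_le_mul_left r h
    rw [Nat.mul_add] at this; omega
  · subst h; omega
  · have : r * (j' + 1) ≤ r * j := Nat.mul_le_mul_left r h
    rw [Nat.mul_add] at this; omega

/-- decomposition of a non-valley position `2 ≤ q < r*k+1`. -/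
lemma nonvly_decomp {r k q : ℕ} (hr : 2 ≤ r) (hq2 : 2 ≤ q) (hqn : q < r * k + 1)
    (hnv : ¬ Vly r k q) : ∃ j l, j < k ∧ 2 ≤ l ∧ l ≤ r ∧ q = r * j + l := by
  refine ⟨(q - 2) / r, (q - 2) % r + 2, ?_, ?_, ?_, ?_⟩
  · rcases Nat.lt_or_ge ((q - 2) / r) k with h' | h'
    · exact h'
    · exfalso
      have h1 : r * k ≤ r * ((q - 2) / r) := Nat.mul_le_mul_left r h'
      have h2 : r * ((q - 2) / r) ≤ q - 2 := Nat.mul_div_le (q - 2) r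
      omega
  · omega
  · -- (q-2) % r + 2 ≤ r unless (q-2)%r = r-1 which makes q a valley
    have hm : (q - 2) % r < r := Nat.mod_lt _ (by omega)
    rcases Nat.lt_or_ge ((q - 2) % r) (r - 1) with h' | h'
    · omega
    · exfalso
      have hmod : (q - 2) % r = r - 1 := by omega
      apply hnv
      rw [vly_iff hr hqn]
      have := Nat.div_add_mod (q - 2) r
      have hq : q = r * ((q - 2) / r + 1) + 1 := by
        rw [Nat.mul_add]
        omega
      rw [hq]
      simp [Nat.mul_add_mod, Nat.mod_eq_of_lt (show 1 < r by omega)]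
  · have := Nat.div_add_mod (q - 2) r
    omega

/-- A1: the subword on non-valley positions is increasing. -/
lemma nonvly_mono {r k : ℕ} {w : ℕ → ℕ} (hr : 2 ≤ r) (hk : 1 ≤ k)
    (hc : IsCluster r k w) :
    ∀ q, q < r * k + 1 → ∀ p, p < q → ¬ Vly r k p → ¬ Vly r k q → w p < w q := by
  intro q
  induction q using Nat.strong_induction_on with
  | _ q ih =>
    intro hqn p hpq hpv hqv
    have hq2 : 2 ≤ q := by
      rcases Nat.lt_or_ge q 2 with h | h
      · exfalso
        interval_cases q
        · omega
        · exact hqv ⟨0, hk, by omega⟩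
      · exact h
    obtain ⟨j, l, hj, hl2, hlr, rfl⟩ := nonvly_decomp hr hq2 hqn hqv
    have hjr : r * j + r ≤ r * k := by
      have : r * (j + 1) ≤ r * k := Nat.mul_le_mul_left r hj
      rw [Nat.mul_add] at this; omega
    rcases Nat.eq_or_lt_of_le hl2 with hl | hl
    · -- l = 2, prev = r*j
      have hl' : l = 2 := hl.symm
      subst hl'
      have hw : w (r * j) < w (r * j + 2) := (hc j hj).2.1
      have hprevnv : ¬ Vly r k (r * j) := by
        rintro ⟨j', hj', he⟩
        rcases Nat.lt_trichotomy j j' with h | h | h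
        · have : r * (j + 1) ≤ r * j' := Nat.mul_le_mul_left r h
          rw [Nat.mul_add] at this; omega
        · subst h; omega
        · have : r * (j' + 1) ≤ r * j := Nat.mul_le_mul_left r h
          rw [Nat.mul_add] at this; omega
      rcases Nat.lt_trichotomy p (r * j) with h | h | h
      · exact lt_trans (ih (r * j) (by omega) (by omega) p h hpv hprevnv) hw
      · rw [h]; exact hw
      · exfalso
        have : p = r * j + 1 := by omega
        exact hpv ⟨j, hj, this⟩
    · -- l ≥ 3, prev = r*j + (l-1)
      have hw : w (r * j + (l - 1)) < w (r * j + l) := by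
        have := (hc j hj).2.2 (l - 1) (by omega) (by omega)
        have he : r * j + (l - 1) + 1 = r * j + l := by omega
        rwa [he] at this
      have hprevnv : ¬ Vly r k (r * j + (l - 1)) := by
        rintro ⟨j', hj', he⟩
        rcases Nat.lt_trichotomy j j' with h | h | h
        · have : r * (j + 1) ≤ r * j' := Nat.mul_le_mul_left r h
          rw [Nat.mul_add] at this; omega
        · subst h; omega
        · have : r * (j' + 1) ≤ r * j := Nat.mul_le_mul_left r h
          rw [Nat.mul_add] at this; omega
      rcases Nat.lt_trichotomy p (r * j + (l - 1)) with h | h | h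
      · exact lt_trans (ih (r * j + (l - 1)) (by omega) (by omega) p h hpv hprevnv) hw
      · rw [h]; exact hw
      · exfalso; omega

/-- A2: a valley value is below every later non-valley value. -/
lemma vly_lt_nonvly {r k : ℕ} {w : ℕ → ℕ} (hr : 2 ≤ r) (hk : 1 ≤ k)
    (hc : IsCluster r k w) {j q : ℕ} (hj : j < k) (hq : r * j + 1 < q)
    (hqn : q < r * k + 1) (hnv : ¬ Vly r k q) : w (r * j + 1) < w q := by
  have h1 : w (r * j + 1) < w (r * j) := (hc j hj).1
  have h2 : w (r * j) < w (r * j + 2) := (hc j hj).2.1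
  rcases Nat.eq_or_lt_of_le (show r * j + 2 ≤ q by omega) with h | h
  · rw [← h]; omega
  · have h3 : w (r * j + 2) < w q :=
      nonvly_mono hr hk hc q hqn _ h (not_vly_two hr) hnv
    omega

section Perm

variable {n : ℕ} (σ : Equiv.Perm (Fin n))

lemma ofPerm_lt {i : ℕ} (h : i < n) : ofPerm σ i < n := by
  simp only [ofPerm, dif_pos h]
  exact (σ ⟨i, h⟩).isLt

lemma ofPerm_inv_ofPerm {i : ℕ} (h : i < n) : ofPerm σ⁻¹ (ofPerm σ i) = i := by
  simp only [ofPerm, dif_pos h, dif_pos (σ ⟨i, h⟩).isLt]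
  simp

lemma ofPerm_ofPerm_inv {i : ℕ} (h : i < n) : ofPerm σ (ofPerm σ⁻¹ i) = i := by
  have := ofPerm_inv_ofPerm σ⁻¹ h
  simpa using this

lemma ofPerm_injOn {i j : ℕ} (hi : i < n) (hj : j < n)
    (h : ofPerm σ i = ofPerm σ j) : i = j := by
  have h1 := ofPerm_inv_ofPerm σ hi
  have h2 := ofPerm_inv_ofPerm σ hj
  rw [h] at h1
  omega

end Perm

section Top

variable {r k : ℕ} {σ : Equiv.Perm (Fin (r * k + 1))}

/-- Top-block: the entries at positions `r*(k-1)+1+t`, `1 ≤ t ≤ r-1`, are fixed: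
`w (r*(k-1)+1+t) = r*(k-1)+1+t`. -/
lemma top_block (hr : 2 ≤ r) (hk : 1 ≤ k) (hc : IsCluster r k (ofPerm σ)) :
    ∀ t, 1 ≤ t → t ≤ r - 1 → ofPerm σ (r * (k - 1) + 1 + t) = r * (k - 1) + 1 + t := by
  set w := ofPerm σ with hw
  set m := r * (k - 1) + 1 with hm
  have hrk : r * (k - 1) + r = r * k := by
    have : r * (k - 1) + r = r * (k - 1 + 1) := by ring
    rw [this, Nat.sub_add_cancel hk]
  have hmn : m + (r - 1) = r * k := by omega
  -- positions m+t are non-valleys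
  have hnv : ∀ t, 1 ≤ t → t ≤ r - 1 → ¬ Vly r k (m + t) := by
    intro t ht1 ht2 hv
    rw [vly_iff hr (by omega)] at hv
    have : m + t = r * (k - 1) + (1 + t) := by omega
    rw [this, Nat.mul_add_mod] at hv
    rcases Nat.lt_or_ge (1 + t) r with h | h
    · rw [Nat.mod_eq_of_lt h] at hv; omega
    · have : 1 + t = r := by omega
      rw [this, Nat.mod_self] at hv; omega
  -- upper bound by downward chain
  have hub : ∀ s, s ≤ r - 2 → w (r * k - s) ≤ r * k - s := by
    intro s
    induction s with
    | zero =>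
      intro _
      simp only [Nat.sub_zero]
      have : w (r * k) < r * k + 1 := ofPerm_lt σ (by omega)
      omega
    | succ s ih =>
      intro hs
      have h1 : w (r * k - (s + 1)) < w (r * k - s) := by
        apply nonvly_mono hr hk hc _ (by omega) _ (by omega)
        · have := hnv (r - 1 - (s + 1)) (by omega) (by omega)
          have he : m + (r - 1 - (s + 1)) = r * k - (s + 1) := by omega
          rwa [he] at this
        · have := hnv (r - 1 - s) (by omega) (by omega)
          have he : m + (r - 1 - s) = r * k - s := by omega
          rwa [he] at this
      have := ih (by omega)
      omega
  intro t ht1 ht2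
  have hub' : w (m + t) ≤ m + t := by
    have := hub (r - 1 - t) (by omega)
    have he : r * k - (r - 1 - t) = m + t := by omega
    rwa [he] at this
  -- lower bound by counting
  have hlb : m + t ≤ w (m + t) := by
    have hcard : ∀ q, q < m + t → w q < w (m + t) := by
      intro q hq
      rcases Classical.em (Vly r k q) with hv | hv
      · obtain ⟨j, hj, rfl⟩ := hv
        exact vly_lt_nonvly hr hk hc hj (by omega) (by omega)
          (hnv t ht1 ht2)
      · exact nonvly_mono hr hk hc _ (by omega) _ hq hv (hnv t ht1 ht2)
    have hinj : Set.InjOn w (Finset.range (m + t)) := by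
      intro a ha b hb hab
      simp only [Finset.coe_range, Set.mem_Iio] at ha hb
      exact ofPerm_injOn σ (by omega) (by omega) hab
    have hmaps : ∀ a ∈ Finset.range (m + t), w a ∈ Finset.range (w (m + t)) := by
      intro a ha
      simp only [Finset.mem_range] at ha ⊢
      exact hcard a ha
    have := Finset.card_le_card_of_injOn w hmaps hinj
    simpa using this
  omega

/-- values at positions `≤ m = r*(k-1)+1` are `≤ m`. -/
lemma low_block (hr : 2 ≤ r) (hk : 1 ≤ k) (hc : IsCluster r k (ofPerm σ)) :
    ∀ i, i ≤ r * (k - 1) + 1 → ofPerm σ i ≤ r * (k - 1) + 1 := by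
  intro i hi
  set m := r * (k - 1) + 1 with hm
  have hrk : r * (k - 1) + r = r * k := by
    have : r * (k - 1) + r = r * (k - 1 + 1) := by ring
    rw [this, Nat.sub_add_cancel hk]
  have h1 : ofPerm σ i < r * k + 1 := ofPerm_lt σ (by omega)
  by_contra h
  push_neg at h
  -- so ofPerm σ i = m + t  with 1 ≤ t ≤ r - 1
  set t := ofPerm σ i - m with ht
  have ht1 : 1 ≤ t := by omega
  have ht2 : t ≤ r - 1 := by omega
  have := top_block hr hk hc t ht1 ht2
  have he : ofPerm σ (m + t) = ofPerm σ i := by rw [this]; omega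
  have := ofPerm_injOn σ (show m + t < r * k + 1 by omega) (by omega) he
  omega

end Top

/-- The key condition at valley `j`: both value-neighbors of the valley value occur
at earlier positions. -/
def wcond (r : ℕ) {n : ℕ} (σ : Equiv.Perm (Fin n)) (j : ℕ) : Prop :=
  ofPerm σ⁻¹ (ofPerm σ (r * j + 1) - 1) < r * j + 1 ∧
  ofPerm σ⁻¹ (ofPerm σ (r * j + 1) + 1) < r * j + 1

def Wset (r k : ℕ) : Finset (Equiv.Perm (Fin (r * k + 1))) :=
  Finset.univ.filter
    (fun σ => IsCluster r k (ofPerm σ) ∧ ∀ j ∈ Finset.Icc 1 (k - 1), wcond r σ j)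

section Peak

variable {r k : ℕ} {σ : Equiv.Perm (Fin (r * k + 1))}

lemma pk_eq (hr : 2 ≤ r) (hk : 1 ≤ k) (hc : IsCluster r k (ofPerm σ)) :
    pkNum (r * k + 1) (ofPerm σ⁻¹) =
      ((Finset.Icc 1 (k - 1)).filter (wcond r σ)).card := by
  have hn1 : r * k + 1 - 1 = r * k := by omega
  rw [pkNum, hn1]
  refine (Finset.card_bij (fun j _ => ofPerm σ (r * j + 1)) ?_ ?_ ?_).symm
  · -- maps into
    intro j hj
    simp only [Finset.mem_filter, Finset.mem_Icc, wcond] at hj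
    obtain ⟨⟨hj1, hj2⟩, hw1, hw2⟩ := hj
    have hjk : j < k := by omega
    have hpn : r * j + 1 < r * k + 1 := by
      have : r * (j + 1) ≤ r * k := Nat.mul_le_mul_left r (by omega)
      rw [Nat.mul_add] at this; omega
    have hpa : ofPerm σ⁻¹ (ofPerm σ (r * j + 1)) = r * j + 1 := ofPerm_inv_ofPerm σ hpn
    have ha1 : 1 ≤ ofPerm σ (r * j + 1) := by
      by_contra h
      push_neg at h
      have h0 : ofPerm σ (r * j + 1) - 1 = ofPerm σ (r * j + 1) := by omega
      rw [h0, hpa] at hw1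
      omega
    have ha2 : ofPerm σ (r * j + 1) < r * k := by
      have h1 : ofPerm σ (r * j + 1) < ofPerm σ (r * j) := (hc j hjk).1
      have h2 : ofPerm σ (r * j) < r * k + 1 := ofPerm_lt σ (by omega)
      omega
    simp only [Finset.mem_filter, Finset.mem_Ico]
    exact ⟨⟨ha1, ha2⟩, by rw [hpa]; exact hw1, by rw [hpa]; exact hw2⟩
  · -- injective
    intro j hj j' hj' he
    simp only [Finset.mem_filter, Finset.mem_Icc] at hj hj'
    have hpn : r * j + 1 < r * k + 1 := by
      have : r * (j + 1) ≤ r * k := Nat.mul_le_mul_left r (by omega)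
      rw [Nat.mul_add] at this; omega
    have hpn' : r * j' + 1 < r * k + 1 := by
      have : r * (j' + 1) ≤ r * k := Nat.mul_le_mul_left r (by omega)
      rw [Nat.mul_add] at this; omega
    have := ofPerm_injOn σ hpn hpn' he
    exact Nat.eq_of_mul_eq_mul_left (show 0 < r by omega)
      (show r * j = r * j' by omega)
  · -- surjective
    intro i hi
    simp only [Finset.mem_filter, Finset.mem_Ico] at hi
    obtain ⟨⟨hi1, hi2⟩, hp1, hp2⟩ := hi
    have hin : i < r * k + 1 := by omega
    have hpn : ofPerm σ⁻¹ i < r * k + 1 := ofPerm_lt σ⁻¹ hin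
    have hwp : ofPerm σ (ofPerm σ⁻¹ i) = i := ofPerm_ofPerm_inv σ hin
    have hvp : Vly r k (ofPerm σ⁻¹ i) := by
      by_contra hnv
      have hi1n : i + 1 < r * k + 1 := by omega
      have hqn : ofPerm σ⁻¹ (i + 1) < r * k + 1 := ofPerm_lt σ⁻¹ hi1n
      have hwq : ofPerm σ (ofPerm σ⁻¹ (i + 1)) = i + 1 := ofPerm_ofPerm_inv σ hi1n
      rcases Classical.em (Vly r k (ofPerm σ⁻¹ (i + 1))) with hv | hv
      · obtain ⟨j', hj', hqe⟩ := hv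
        have := vly_lt_nonvly hr hk hc hj' (by omega) hpn hnv
        rw [← hqe, hwq, hwp] at this
        omega
      · have := nonvly_mono hr hk hc _ hpn _ hp2 hv hnv
        rw [hwq, hwp] at this
        omega
    obtain ⟨j, hjk, hpe⟩ := hvp
    have hwv : ofPerm σ (r * j + 1) = i := by rw [← hpe]; exact hwp
    have hj1 : 1 ≤ j := by
      by_contra h
      push_neg at h
      have hj0 : j = 0 := by omega
      subst hj0
      have hp1' : ofPerm σ⁻¹ (i - 1) = 0 := by omega
      have hw0 : ofPerm σ 0 = i - 1 := by
        have := ofPerm_ofPerm_inv σ (show i - 1 < r * k + 1 by omega)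
        rw [hp1'] at this
        exact this
      have h01 := (hc 0 hk).1
      simp only [Nat.mul_zero, Nat.zero_add] at h01 hpe
      rw [hw0] at h01
      have : ofPerm σ 1 = i := by simpa using hwv
      omega
    refine ⟨j, ?_, hwv⟩
    simp only [Finset.mem_filter, Finset.mem_Icc, wcond]
    rw [hwv, ← hpe]
    exact ⟨⟨hj1, by omega⟩, hp1, hp2⟩

lemma pk_iff (hr : 2 ≤ r) (hk : 1 ≤ k) (hc : IsCluster r k (ofPerm σ)) :
    pkNum (r * k + 1) (ofPerm σ⁻¹) = k - 1 ↔
      ∀ j ∈ Finset.Icc 1 (k - 1), wcond r σ j := by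
  rw [pk_eq hr hk hc]
  constructor
  · intro h j hj
    have hcard : (Finset.Icc 1 (k - 1)).card = k - 1 := by
      rw [Nat.card_Icc]; omega
    have hsub : (Finset.Icc 1 (k - 1)).filter (wcond r σ) ⊆ Finset.Icc 1 (k - 1) :=
      Finset.filter_subset _ _
    have : (Finset.Icc 1 (k - 1)).filter (wcond r σ) = Finset.Icc 1 (k - 1) :=
      Finset.eq_of_subset_of_card_le hsub (by omega)
    rw [← this] at hj
    exact (Finset.mem_filter.mp hj).2
  · intro h
    rw [Finset.filter_true_of_mem h, Nat.card_Icc]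
    omega

end Peak

section Base

lemma perm_eq_of_ofPerm_eq {n : ℕ} {σ τ : Equiv.Perm (Fin n)}
    (h : ∀ i, i < n → ofPerm σ i = ofPerm τ i) : σ = τ := by
  apply Equiv.ext
  intro x
  have := h x.1 x.2
  simp only [ofPerm, dif_pos x.2] at this
  exact Fin.ext (by simpa using this)

lemma wset_one {r : ℕ} (hr : 2 ≤ r) : (Wset r 1).card = 1 := by
  have h0 : (0 : ℕ) < r * 1 + 1 := by omega
  have h1 : (1 : ℕ) < r * 1 + 1 := by omega
  set σ0 : Equiv.Perm (Fin (r * 1 + 1)) := Equiv.swap ⟨0, h0⟩ ⟨1, h1⟩ with hσ0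
  have hw0 : ∀ i, i < r * 1 + 1 →
      ofPerm σ0 i = if i = 0 then 1 else if i = 1 then 0 else i := by
    intro i hi
    simp only [ofPerm, dif_pos hi, hσ0]
    by_cases hi0 : i = 0
    · subst hi0
      rw [if_pos rfl]
      simp [Equiv.swap_apply_left]
    · by_cases hi1 : i = 1
      · subst hi1
        rw [if_neg (by omega), if_pos rfl]
        simp [Equiv.swap_apply_right]
      · have hne0 : (⟨i, hi⟩ : Fin (r * 1 + 1)) ≠ ⟨0, h0⟩ := by
          simp [Fin.ext_iff]; omega
        have hne1 : (⟨i, hi⟩ : Fin (r * 1 + 1)) ≠ ⟨1, h1⟩ := by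
          simp [Fin.ext_iff]; omega
        rw [Equiv.swap_apply_of_ne_of_ne hne0 hne1, if_neg hi0, if_neg hi1]
  rw [Finset.card_eq_one]
  refine ⟨σ0, ?_⟩
  ext σ
  simp only [Finset.mem_singleton, Wset, Finset.mem_filter, Finset.mem_univ, true_and]
  constructor
  · rintro ⟨hc, -⟩
    apply perm_eq_of_ofPerm_eq
    intro i hi
    rw [hw0 i hi]
    -- top block gives w q = q for 2 ≤ q ≤ r
    have htop : ∀ q, 2 ≤ q → q ≤ r → ofPerm σ q = q := by
      intro q hq2 hqr
      have := top_block (σ := σ) hr (le_refl 1) hc (q - 1) (by omega) (by omega)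
      simp only [Nat.sub_self, Nat.mul_zero, Nat.zero_add] at this
      have he : 1 + (q - 1) = q := by omega
      rwa [he] at this
    have hlow : ∀ i, i ≤ 1 → ofPerm σ i ≤ 1 := by
      intro i hi
      have := low_block (σ := σ) hr (le_refl 1) hc i (by omega)
      simpa using this
    have hcl := (hc 0 (by omega)).1
    simp only [Nat.mul_zero, Nat.zero_add] at hcl
    have hw1 : ofPerm σ 1 = 0 := by
      have := hlow 1 (le_refl 1)
      have := hlow 0 (by omega)
      omega
    have hw00 : ofPerm σ 0 = 1 := by
      have h01 := hlow 0 (by omega)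
      have hne := ofPerm_injOn σ (show 1 < r * 1 + 1 by omega) (show 0 < r * 1 + 1 by omega)
      rcases Nat.eq_or_lt_of_le h01 with h | h
      · omega
      · exfalso
        have : ofPerm σ 0 = 0 := by omega
        rw [hw1] at hne
        have := hne this.symm  -- careful
        omega
    rcases Nat.lt_or_ge i 2 with h | h
    · interval_cases i
      · simpa using hw00
      · simpa using hw1
    · have : ofPerm σ i = i := htop i h (by omega)
      rw [this, if_neg (by omega : ¬ i = 0), if_neg (by omega : ¬ i = 1)]
  · rintro rfl
    constructor
    · intro j hj
      have hj0 : j = 0 := by omega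
      subst hj0
      simp only [Nat.mul_zero, Nat.zero_add]
      refine ⟨?_, ?_, ?_⟩
      · rw [hw0 0 (by omega), hw0 1 (by omega)]; norm_num
      · rw [hw0 0 (by omega), hw0 2 (by omega)]; norm_num
      · intro l hl2 hlr
        rw [hw0 l (by omega), hw0 (l + 1) (by omega)]
        simp only [if_neg (by omega : ¬ l = 0), if_neg (by omega : ¬ l = 1),
          if_neg (by omega : ¬ l + 1 = 0), if_neg (by omega : ¬ l + 1 = 1)]
        omega
    · intro j hj
      simp only [Finset.mem_Icc] at hj
      omega

end Base

section Step

/-- allowed insertion values -/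
def allowedSet (r K : ℕ) (u : Equiv.Perm (Fin (r * K + 1))) : Finset ℕ :=
  Finset.Icc 1 (r * K) \
    (Finset.Icc 1 (K - 1)).biUnion
      (fun j => {ofPerm u (r * j + 1), ofPerm u (r * j + 1) + 1})

lemma shiftdown_lt {v x y : ℕ} (hx : x ≠ v) (hy : y ≠ v) (hxy : x < y) :
    (if x < v then x else x - 1) < (if y < v then y else y - 1) := by
  split_ifs <;> omega

lemma shiftup_lt {v x y : ℕ} (hxy : x < y) :
    (if x < v then x else x + 1) < (if y < v then y else y + 1) := by
  split_ifs <;> omega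

variable {r K : ℕ}

lemma Wset_cluster {k : ℕ} {σ : Equiv.Perm (Fin (r * k + 1))} (h : σ ∈ Wset r k) :
    IsCluster r k (ofPerm σ) := by
  simp only [Wset, Finset.mem_filter] at h
  exact h.2.1

lemma Wset_cond {k : ℕ} {σ : Equiv.Perm (Fin (r * k + 1))} (h : σ ∈ Wset r k) :
    ∀ j ∈ Finset.Icc 1 (k - 1), wcond r σ j := by
  simp only [Wset, Finset.mem_filter] at h
  exact h.2.2

lemma Wset_mem {k : ℕ} {σ : Equiv.Perm (Fin (r * k + 1))}
    (h1 : IsCluster r k (ofPerm σ)) (h2 : ∀ j ∈ Finset.Icc 1 (k - 1), wcond r σ j) :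
    σ ∈ Wset r k := by
  simp only [Wset, Finset.mem_filter]
  exact ⟨Finset.mem_univ _, h1, h2⟩

/-- facts about a member of `Wset r (K+1)` -/
lemma big_facts (hr : 2 ≤ r) (hK : 1 ≤ K) {σ : Equiv.Perm (Fin (r * (K + 1) + 1))}
    (h : σ ∈ Wset r (K + 1)) :
    1 ≤ ofPerm σ (r * K + 1) ∧ ofPerm σ (r * K + 1) < r * K + 1 ∧
      (∀ i, i ≤ r * K + 1 → ofPerm σ i ≤ r * K + 1) ∧
      (∀ t, 1 ≤ t → t ≤ r - 1 → ofPerm σ (r * K + 1 + t) = r * K + 1 + t) := by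
  have hNK : r * (K + 1) = r * K + r := by ring
  have hc := Wset_cluster h
  have hcond := Wset_cond h
  have htop : ∀ t, 1 ≤ t → t ≤ r - 1 → ofPerm σ (r * K + 1 + t) = r * K + 1 + t := by
    intro t ht1 ht2
    have := top_block (σ := σ) hr (by omega) hc t ht1 ht2
    simpa using this
  have hlow : ∀ i, i ≤ r * K + 1 → ofPerm σ i ≤ r * K + 1 := by
    intro i hi
    have := low_block (σ := σ) hr (by omega) hc i (by simpa using hi)
    simpa using this
  have hcondK : wcond r σ K := hcond K (by simp; omega)
  obtain ⟨hK1, hK2⟩ := hcondK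
  have hMN : r * K + 1 < r * (K + 1) + 1 := by omega
  have hpv : ofPerm σ⁻¹ (ofPerm σ (r * K + 1)) = r * K + 1 := ofPerm_inv_ofPerm σ hMN
  refine ⟨?_, ?_, hlow, htop⟩
  · by_contra hv0
    push_neg at hv0
    have h0 : ofPerm σ (r * K + 1) - 1 = ofPerm σ (r * K + 1) := by omega
    rw [h0, hpv] at hK1
    omega
  · have hvM : ofPerm σ (r * K + 1) ≤ r * K + 1 := hlow _ (le_refl _)
    rcases Nat.eq_or_lt_of_le hvM with h' | h'
    · exfalso
      have ht1 := htop 1 (le_refl 1) (by omega)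
      have : ofPerm σ⁻¹ (ofPerm σ (r * K + 1) + 1) = r * K + 1 + 1 := by
        rw [h']
        have := ofPerm_inv_ofPerm σ (show r * K + 1 + 1 < r * (K + 1) + 1 by omega)
        rw [ht1] at this
        exact this
      omega
    · exact h'

/-- the down function -/
def dfun (σ : Equiv.Perm (Fin (r * (K + 1) + 1))) (i : Fin (r * K + 1)) : ℕ :=
  if ofPerm σ i.1 < ofPerm σ (r * K + 1) then ofPerm σ i.1 else ofPerm σ i.1 - 1

lemma dfun_ne (hr : 2 ≤ r) (hK : 1 ≤ K) {σ : Equiv.Perm (Fin (r * (K + 1) + 1))}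
    (i : Fin (r * K + 1)) :
    ofPerm σ i.1 ≠ ofPerm σ (r * K + 1) := by
  have hNK : r * (K + 1) = r * K + r := by ring
  intro he
  have := ofPerm_injOn σ (show (i : ℕ) < r * (K + 1) + 1 by
    have := i.2; omega) (show r * K + 1 < r * (K + 1) + 1 by omega) he
  have := i.2; omega

lemma dfun_lt (hr : 2 ≤ r) (hK : 1 ≤ K) {σ : Equiv.Perm (Fin (r * (K + 1) + 1))}
    (h : σ ∈ Wset r (K + 1)) (i : Fin (r * K + 1)) : dfun σ i < r * K + 1 := by
  obtain ⟨hv1, hv2, hlow, htop⟩ := big_facts hr hK h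
  have h1 : ofPerm σ i.1 ≤ r * K + 1 := hlow i.1 (by have := i.2; omega)
  have h2 := dfun_ne hr hK (σ := σ) i
  unfold dfun
  split_ifs <;> omega

/-- the down map -/
noncomputable def downPerm (hr : 2 ≤ r) (hK : 1 ≤ K)
    {σ : Equiv.Perm (Fin (r * (K + 1) + 1))} (h : σ ∈ Wset r (K + 1)) :
    Equiv.Perm (Fin (r * K + 1)) :=
  Equiv.ofBijective (fun i => ⟨dfun σ i, dfun_lt hr hK h i⟩)
    (Finite.injective_iff_bijective.mp (by
      intro a b hab
      simp only [Fin.mk.injEq] at hab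
      have hNK : r * (K + 1) = r * K + r := by ring
      have ha2 := dfun_ne hr hK (σ := σ) a
      have hb2 := dfun_ne hr hK (σ := σ) b
      have heq : ofPerm σ a.1 = ofPerm σ b.1 := by
        by_contra hne
        unfold dfun at hab
        rcases Nat.lt_or_ge (ofPerm σ a.1) (ofPerm σ b.1) with h' | h'
        · have := shiftdown_lt (v := ofPerm σ (r * K + 1)) ha2 hb2 h'
          omega
        · have h'' : ofPerm σ b.1 < ofPerm σ a.1 := by omega
          have := shiftdown_lt (v := ofPerm σ (r * K + 1)) hb2 ha2 h''
          omega
      have := ofPerm_injOn σ (show (a : ℕ) < r * (K + 1) + 1 by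
        have := a.2; omega) (show (b : ℕ) < r * (K + 1) + 1 by
        have := b.2; omega) heq
      exact Fin.ext this))

lemma ofPerm_downPerm (hr : 2 ≤ r) (hK : 1 ≤ K)
    {σ : Equiv.Perm (Fin (r * (K + 1) + 1))} (h : σ ∈ Wset r (K + 1))
    {i : ℕ} (hi : i < r * K + 1) :
    ofPerm (downPerm hr hK h) i =
      if ofPerm σ i < ofPerm σ (r * K + 1) then ofPerm σ i else ofPerm σ i - 1 := by
  show (if h' : i < r * K + 1 then ((downPerm hr hK h) ⟨i, h'⟩ : ℕ) else 0) = _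
  rw [dif_pos hi]
  rfl


lemma allowed_bounds {u : Equiv.Perm (Fin (r * K + 1))} {v : ℕ}
    (hv : v ∈ allowedSet r K u) : 1 ≤ v ∧ v ≤ r * K := by
  have := (Finset.mem_sdiff.mp hv).1
  simpa using this

/-- the up function -/
def ufun (u : Equiv.Perm (Fin (r * K + 1))) (v : ℕ) (i : ℕ) : ℕ :=
  if i < r * K + 1 then (if ofPerm u i < v then ofPerm u i else ofPerm u i + 1)
  else if i = r * K + 1 then v else i

lemma ufun_lt (hr : 2 ≤ r) (hK : 1 ≤ K) {u : Equiv.Perm (Fin (r * K + 1))} {v : ℕ}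
    (hv : v ∈ allowedSet r K u) {i : ℕ} (hi : i < r * (K + 1) + 1) :
    ufun u v i < r * (K + 1) + 1 := by
  obtain ⟨hv1, hv2⟩ := allowed_bounds hv
  have hNK : r * (K + 1) = r * K + r := by ring
  unfold ufun
  by_cases h1 : i < r * K + 1
  · rw [if_pos h1]
    have := ofPerm_lt u h1
    split_ifs <;> omega
  · rw [if_neg h1]
    by_cases h2 : i = r * K + 1
    · rw [if_pos h2]; omega
    · rw [if_neg h2]; omega

/-- the up map -/
noncomputable def upPerm (hr : 2 ≤ r) (hK : 1 ≤ K) {u : Equiv.Perm (Fin (r * K + 1))}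
    {v : ℕ} (hv : v ∈ allowedSet r K u) :
    Equiv.Perm (Fin (r * (K + 1) + 1)) :=
  Equiv.ofBijective (fun i => ⟨ufun u v i.1, ufun_lt hr hK hv i.2⟩)
    (Finite.injective_iff_bijective.mp (by
      obtain ⟨hv1, hv2⟩ := allowed_bounds hv
      have hNK : r * (K + 1) = r * K + r := by ring
      intro a b hab
      simp only [Fin.mk.injEq] at hab
      unfold ufun at hab
      apply Fin.ext
      -- facts about region A values
      have hA : ∀ x, x < r * K + 1 →
          (if ofPerm u x < v then ofPerm u x else ofPerm u x + 1) ≤ r * K + 1 ∧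
          (if ofPerm u x < v then ofPerm u x else ofPerm u x + 1) ≠ v := by
        intro x hx
        have := ofPerm_lt u hx
        constructor <;> (split_ifs <;> omega)
      by_cases ha : a.1 < r * K + 1 <;> by_cases hb : b.1 < r * K + 1
      · rw [if_pos ha, if_pos hb] at hab
        have : ofPerm u a.1 = ofPerm u b.1 := by
          split_ifs at hab <;> omega
        exact ofPerm_injOn u ha hb this
      · exfalso
        rw [if_pos ha, if_neg hb] at hab
        have h1 := (hA a.1 ha).1
        have h2 := (hA a.1 ha).2
        by_cases h3 : b.1 = r * K + 1
        · rw [if_pos h3] at hab; exact h2 hab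
        · rw [if_neg h3] at hab; have := b.2; omega
      · exfalso
        rw [if_neg ha, if_pos hb] at hab
        have h1 := (hA b.1 hb).1
        have h2 := (hA b.1 hb).2
        by_cases h3 : a.1 = r * K + 1
        · rw [if_pos h3] at hab; exact h2 hab.symm
        · rw [if_neg h3] at hab; have := a.2; omega
      · rw [if_neg ha, if_neg hb] at hab
        by_cases h2 : a.1 = r * K + 1 <;> by_cases h3 : b.1 = r * K + 1
        · omega
        · rw [if_pos h2, if_neg h3] at hab; have := b.2; omega
        · rw [if_neg h2, if_pos h3] at hab; have := a.2; omega
        · rw [if_neg h2, if_neg h3] at hab; omega))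

lemma ofPerm_upPerm_lt (hr : 2 ≤ r) (hK : 1 ≤ K) {u : Equiv.Perm (Fin (r * K + 1))}
    {v : ℕ} (hv : v ∈ allowedSet r K u) {i : ℕ} (hi : i < r * K + 1) :
    ofPerm (upPerm hr hK hv) i =
      if ofPerm u i < v then ofPerm u i else ofPerm u i + 1 := by
  have hNK : r * (K + 1) = r * K + r := by ring
  show (if h' : i < r * (K + 1) + 1 then ((upPerm hr hK hv) ⟨i, h'⟩ : ℕ) else 0) = _
  rw [dif_pos (show i < r * (K + 1) + 1 by omega)]
  show ufun u v i = _
  unfold ufun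
  rw [if_pos hi]

lemma ofPerm_upPerm_eq (hr : 2 ≤ r) (hK : 1 ≤ K) {u : Equiv.Perm (Fin (r * K + 1))}
    {v : ℕ} (hv : v ∈ allowedSet r K u) :
    ofPerm (upPerm hr hK hv) (r * K + 1) = v := by
  have hNK : r * (K + 1) = r * K + r := by ring
  show (if h' : r * K + 1 < r * (K + 1) + 1 then ((upPerm hr hK hv) ⟨_, h'⟩ : ℕ) else 0) = _
  rw [dif_pos (show r * K + 1 < r * (K + 1) + 1 by omega)]
  show ufun u v (r * K + 1) = _
  unfold ufun
  rw [if_neg (by omega), if_pos rfl]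

lemma ofPerm_upPerm_gt (hr : 2 ≤ r) (hK : 1 ≤ K) {u : Equiv.Perm (Fin (r * K + 1))}
    {v : ℕ} (hv : v ∈ allowedSet r K u) {i : ℕ} (hi1 : r * K + 1 < i)
    (hi2 : i < r * (K + 1) + 1) :
    ofPerm (upPerm hr hK hv) i = i := by
  show (if h' : i < r * (K + 1) + 1 then ((upPerm hr hK hv) ⟨i, h'⟩ : ℕ) else 0) = _
  rw [dif_pos hi2]
  show ufun u v i = _
  unfold ufun
  rw [if_neg (by omega), if_neg (by omega)]


lemma wne (hr : 2 ≤ r) (hK : 1 ≤ K) {σ : Equiv.Perm (Fin (r * (K + 1) + 1))}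
    {p : ℕ} (hp : p < r * K + 1) :
    ofPerm σ p ≠ ofPerm σ (r * K + 1) := by
  have hNK : r * (K + 1) = r * K + r := by ring
  intro he
  have := ofPerm_injOn σ (by omega) (show r * K + 1 < r * (K + 1) + 1 by omega) he
  omega

lemma down_mem (hr : 2 ≤ r) (hK : 1 ≤ K)
    {σ : Equiv.Perm (Fin (r * (K + 1) + 1))} (h : σ ∈ Wset r (K + 1)) :
    downPerm hr hK h ∈ Wset r K := by
  have hNK : r * (K + 1) = r * K + r := by ring
  obtain ⟨hv1, hv2, hlow, htop⟩ := big_facts hr hK h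
  have hc := Wset_cluster h
  have hcond := Wset_cond h
  have hcondK : ∀ j, 1 ≤ j → j ≤ K → wcond r σ j := by
    intro j hj1 hj2
    exact hcond j (by simp; omega)
  set u := downPerm hr hK h with hu
  apply Wset_mem
  · -- cluster
    intro j hj
    have hjr : r * j + r ≤ r * K := by
      have : r * (j + 1) ≤ r * K := Nat.mul_le_mul_left r (by omega)
      rw [Nat.mul_add] at this; omega
    have hcj := hc j (by omega)
    refine ⟨?_, ?_, ?_⟩
    · rw [ofPerm_downPerm hr hK h (by omega), ofPerm_downPerm hr hK h (by omega)]
      exact shiftdown_lt (wne hr hK (by omega)) (wne hr hK (by omega)) hcj.1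
    · rw [ofPerm_downPerm hr hK h (by omega), ofPerm_downPerm hr hK h (by omega)]
      exact shiftdown_lt (wne hr hK (by omega)) (wne hr hK (by omega)) hcj.2.1
    · intro l hl2 hlr
      rw [ofPerm_downPerm hr hK h (by omega), ofPerm_downPerm hr hK h (by omega)]
      exact shiftdown_lt (wne hr hK (by omega)) (wne hr hK (by omega)) (hcj.2.2 l hl2 hlr)
  · -- conds
    intro j hj
    simp only [Finset.mem_Icc] at hj
    obtain ⟨hj1, hj2⟩ := hj
    have hjr : r * j + r ≤ r * K := by
      have : r * (j + 1) ≤ r * K := Nat.mul_le_mul_left r (by omega)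
      rw [Nat.mul_add] at this; omega
    obtain ⟨hw1, hw2⟩ := hcondK j hj1 (by omega)
    have hpM : r * j + 1 < r * K + 1 := by omega
    have hpa : ofPerm σ⁻¹ (ofPerm σ (r * j + 1)) = r * j + 1 := ofPerm_inv_ofPerm σ (by omega)
    have hvpos : ofPerm σ⁻¹ (ofPerm σ (r * K + 1)) = r * K + 1 := ofPerm_inv_ofPerm σ (by omega)
    have ha1 : 1 ≤ ofPerm σ (r * j + 1) := by
      by_contra h0
      push_neg at h0
      have : ofPerm σ (r * j + 1) - 1 = ofPerm σ (r * j + 1) := by omega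
      rw [this, hpa] at hw1
      omega
    have haM : ofPerm σ (r * j + 1) ≤ r * K + 1 := hlow _ (by omega)
    have hane : ofPerm σ (r * j + 1) ≠ ofPerm σ (r * K + 1) := wne hr hK hpM
    -- the neighbor values are not v
    have ham1 : ofPerm σ (r * j + 1) - 1 ≠ ofPerm σ (r * K + 1) := by
      intro he
      rw [he, hvpos] at hw1
      omega
    have hap1 : ofPerm σ (r * j + 1) + 1 ≠ ofPerm σ (r * K + 1) := by
      intro he
      rw [he, hvpos] at hw2
      omega
    -- positions of neighbors
    have hm1N : ofPerm σ (r * j + 1) - 1 < r * (K + 1) + 1 := by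
      have := ofPerm_lt σ (show r * j + 1 < r * (K + 1) + 1 by omega)
      omega
    have hp1N : ofPerm σ (r * j + 1) + 1 < r * (K + 1) + 1 := by omega
    have hq1 : ofPerm σ (ofPerm σ⁻¹ (ofPerm σ (r * j + 1) - 1)) = ofPerm σ (r * j + 1) - 1 :=
      ofPerm_ofPerm_inv σ hm1N
    have hq2 : ofPerm σ (ofPerm σ⁻¹ (ofPerm σ (r * j + 1) + 1)) = ofPerm σ (r * j + 1) + 1 :=
      ofPerm_ofPerm_inv σ hp1N
    have hq1M : ofPerm σ⁻¹ (ofPerm σ (r * j + 1) - 1) < r * K + 1 := by omega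
    have hq2M : ofPerm σ⁻¹ (ofPerm σ (r * j + 1) + 1) < r * K + 1 := by omega
    constructor
    · -- predecessor condition
      have key : ofPerm u (ofPerm σ⁻¹ (ofPerm σ (r * j + 1) - 1)) =
          ofPerm u (r * j + 1) - 1 := by
        rw [hu, ofPerm_downPerm hr hK h hq1M, ofPerm_downPerm hr hK h hpM, hq1]
        rcases Nat.lt_or_ge (ofPerm σ (r * j + 1)) (ofPerm σ (r * K + 1)) with hav | hav
        · rw [if_pos (by omega), if_pos hav]
        · rw [if_neg (by omega), if_neg (by omega)]
      have := ofPerm_inv_ofPerm u hq1M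
      rw [key] at this
      rw [this]
      exact hw1
    · have key : ofPerm u (ofPerm σ⁻¹ (ofPerm σ (r * j + 1) + 1)) =
          ofPerm u (r * j + 1) + 1 := by
        rw [hu, ofPerm_downPerm hr hK h hq2M, ofPerm_downPerm hr hK h hpM, hq2]
        rcases Nat.lt_or_ge (ofPerm σ (r * j + 1)) (ofPerm σ (r * K + 1)) with hav | hav
        · rw [if_pos (by omega), if_pos hav]
        · rw [if_neg (by omega), if_neg (by omega)]
          omega
      have := ofPerm_inv_ofPerm u hq2M
      rw [key] at this
      rw [this]
      exact hw2


lemma v_mem (hr : 2 ≤ r) (hK : 1 ≤ K)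
    {σ : Equiv.Perm (Fin (r * (K + 1) + 1))} (h : σ ∈ Wset r (K + 1)) :
    ofPerm σ (r * K + 1) ∈ allowedSet r K (downPerm hr hK h) := by
  have hNK : r * (K + 1) = r * K + r := by ring
  obtain ⟨hv1, hv2, hlow, htop⟩ := big_facts hr hK h
  have hcond := Wset_cond h
  rw [allowedSet, Finset.mem_sdiff]
  constructor
  · simp only [Finset.mem_Icc]
    omega
  · intro hmem
    simp only [Finset.mem_biUnion, Finset.mem_Icc, Finset.mem_insert,
      Finset.mem_singleton] at hmem
    obtain ⟨j, ⟨hj1, hj2⟩, hcase⟩ := hmem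
    have hjr : r * j + r ≤ r * K := by
      have : r * (j + 1) ≤ r * K := Nat.mul_le_mul_left r (by omega)
      rw [Nat.mul_add] at this; omega
    have hpM : r * j + 1 < r * K + 1 := by omega
    obtain ⟨hw1, hw2⟩ := hcond j (by simp; omega)
    have hvpos : ofPerm σ⁻¹ (ofPerm σ (r * K + 1)) = r * K + 1 := ofPerm_inv_ofPerm σ (by omega)
    have hane : ofPerm σ (r * j + 1) ≠ ofPerm σ (r * K + 1) := wne hr hK hpM
    rw [ofPerm_downPerm hr hK h hpM] at hcase
    rcases Nat.lt_or_ge (ofPerm σ (r * j + 1)) (ofPerm σ (r * K + 1)) with hav | hav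
    · rw [if_pos hav] at hcase
      rcases hcase with hc1 | hc1
      · omega
      · -- v = a_j + 1 : contradicts hw2
        rw [← hc1, hvpos] at hw2
        omega
    · rw [if_neg (by omega)] at hcase
      rcases hcase with hc1 | hc1
      · -- v = a_j - 1 : contradicts hw1
        rw [← hc1, hvpos] at hw1
        omega
      · omega


lemma allowed_ne {u : Equiv.Perm (Fin (r * K + 1))} {v : ℕ}
    (hv : v ∈ allowedSet r K u) :
    ∀ j, 1 ≤ j → j ≤ K - 1 →
      v ≠ ofPerm u (r * j + 1) ∧ v ≠ ofPerm u (r * j + 1) + 1 := by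
  intro j hj1 hj2
  have hnot := (Finset.mem_sdiff.mp hv).2
  constructor <;> intro he <;> apply hnot <;>
    exact Finset.mem_biUnion.mpr ⟨j, Finset.mem_Icc.mpr ⟨hj1, hj2⟩, by simp [he]⟩

lemma u_last (hr : 2 ≤ r) (hK : 1 ≤ K) {u : Equiv.Perm (Fin (r * K + 1))}
    (hu : u ∈ Wset r K) : ofPerm u (r * K) = r * K := by
  have hKm : r * (K - 1) + r = r * K := by
    have h1 : r * (K - 1) + r = r * (K - 1 + 1) := by ring
    rw [h1, Nat.sub_add_cancel hK]
  have := top_block (σ := u) hr hK (Wset_cluster hu) (r - 1) (by omega) (by omega)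
  have he : r * (K - 1) + 1 + (r - 1) = r * K := by omega
  rwa [he] at this

lemma up_mem (hr : 2 ≤ r) (hK : 1 ≤ K) {u : Equiv.Perm (Fin (r * K + 1))}
    (hu : u ∈ Wset r K) {v : ℕ} (hv : v ∈ allowedSet r K u) :
    upPerm hr hK hv ∈ Wset r (K + 1) := by
  have hNK : r * (K + 1) = r * K + r := by ring
  obtain ⟨hv1, hv2⟩ := allowed_bounds hv
  have huc := Wset_cluster hu
  have hucond := Wset_cond hu
  have hune := allowed_ne hv
  have hulast := u_last hr hK hu
  set W := upPerm hr hK hv with hW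
  apply Wset_mem
  · -- cluster
    intro j hj
    rcases Nat.lt_or_ge j K with hjK | hjK
    · -- j < K : transferred from u
      have hjr : r * j + r ≤ r * K := by
        have : r * (j + 1) ≤ r * K := Nat.mul_le_mul_left r (by omega)
        rw [Nat.mul_add] at this; omega
      have hcj := huc j hjK
      refine ⟨?_, ?_, ?_⟩
      · rw [hW, ofPerm_upPerm_lt hr hK hv (by omega), ofPerm_upPerm_lt hr hK hv (by omega)]
        exact shiftup_lt hcj.1
      · rw [hW, ofPerm_upPerm_lt hr hK hv (by omega), ofPerm_upPerm_lt hr hK hv (by omega)]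
        exact shiftup_lt hcj.2.1
      · intro l hl2 hlr
        rw [hW, ofPerm_upPerm_lt hr hK hv (by omega), ofPerm_upPerm_lt hr hK hv (by omega)]
        exact shiftup_lt (hcj.2.2 l hl2 hlr)
    · -- j = K
      have hjK' : j = K := by omega
      subst hjK'
      have h1 : ofPerm W (r * j + 1) = v := by rw [hW]; exact ofPerm_upPerm_eq hr hK hv
      have h2 : ofPerm W (r * j) = r * j + 1 := by
        rw [hW, ofPerm_upPerm_lt hr hK hv (by omega), hulast, if_neg (by omega)]
      refine ⟨?_, ?_, ?_⟩
      · rw [h1, h2]; omega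
      · have h3 : ofPerm W (r * j + 2) = r * j + 2 := by
          rw [hW]; exact ofPerm_upPerm_gt hr hK hv (by omega) (by omega)
        rw [h2, h3]; omega
      · intro l hl2 hlr
        have h3 : ofPerm W (r * j + l) = r * j + l := by
          rw [hW]; exact ofPerm_upPerm_gt hr hK hv (by omega) (by omega)
        have h4 : ofPerm W (r * j + l + 1) = r * j + l + 1 := by
          rw [hW]; exact ofPerm_upPerm_gt hr hK hv (by omega) (by omega)
        rw [h3, h4]; omega
  · -- conds
    intro j hj
    simp only [Finset.mem_Icc, Nat.add_sub_cancel] at hj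
    obtain ⟨hj1, hj2⟩ := hj
    rcases Nat.lt_or_ge j K with hjK | hjK
    · -- j ≤ K - 1 : transferred from u
      have hjr : r * j + r ≤ r * K := by
        have : r * (j + 1) ≤ r * K := Nat.mul_le_mul_left r (by omega)
        rw [Nat.mul_add] at this; omega
      have hpM : r * j + 1 < r * K + 1 := by omega
      obtain ⟨hw1, hw2⟩ := hucond j (by simp; omega)
      have hpa : ofPerm u⁻¹ (ofPerm u (r * j + 1)) = r * j + 1 := ofPerm_inv_ofPerm u (by omega)
      have ha1 : 1 ≤ ofPerm u (r * j + 1) := by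
        by_contra h0
        push_neg at h0
        have : ofPerm u (r * j + 1) - 1 = ofPerm u (r * j + 1) := by omega
        rw [this, hpa] at hw1
        omega
      have haM : ofPerm u (r * j + 1) < r * K := by
        have hlt : ofPerm u (r * j + 1) < r * K + 1 := ofPerm_lt u (by omega)
        rcases Nat.eq_or_lt_of_le (show ofPerm u (r * j + 1) ≤ r * K by omega) with h' | h'
        · exfalso
          have h'' : ofPerm u (r * j + 1) = ofPerm u (r * K) := by rw [hulast]; exact h'
          have := ofPerm_injOn u hpM (by omega) h''
          omega
        · exact h'
      obtain ⟨hne1, hne2⟩ := hune j hj1 (by omega)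
      -- positions of value-neighbors in u
      have hm1M : ofPerm u (r * j + 1) - 1 < r * K + 1 := by omega
      have hp1M : ofPerm u (r * j + 1) + 1 < r * K + 1 := by omega
      have hq1 : ofPerm u (ofPerm u⁻¹ (ofPerm u (r * j + 1) - 1)) = ofPerm u (r * j + 1) - 1 :=
        ofPerm_ofPerm_inv u hm1M
      have hq2 : ofPerm u (ofPerm u⁻¹ (ofPerm u (r * j + 1) + 1)) = ofPerm u (r * j + 1) + 1 :=
        ofPerm_ofPerm_inv u hp1M
      have hq1M : ofPerm u⁻¹ (ofPerm u (r * j + 1) - 1) < r * K + 1 := ofPerm_lt u⁻¹ hm1M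
      have hq2M : ofPerm u⁻¹ (ofPerm u (r * j + 1) + 1) < r * K + 1 := ofPerm_lt u⁻¹ hp1M
      have hWj : ofPerm W (r * j + 1) =
          if ofPerm u (r * j + 1) < v then ofPerm u (r * j + 1) else ofPerm u (r * j + 1) + 1 := by
        rw [hW]; exact ofPerm_upPerm_lt hr hK hv hpM
      constructor
      · have key : ofPerm W (ofPerm u⁻¹ (ofPerm u (r * j + 1) - 1)) =
            ofPerm W (r * j + 1) - 1 := by
          rw [hW, ofPerm_upPerm_lt hr hK hv hq1M, hq1, ← hW, hWj]
          rcases Nat.lt_or_ge (ofPerm u (r * j + 1)) v with hav | hav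
          · rw [if_pos (by omega), if_pos hav]
          · rw [if_neg (by omega), if_neg (by omega)]
            omega
        have := ofPerm_inv_ofPerm W (show ofPerm u⁻¹ (ofPerm u (r * j + 1) - 1) < r * (K+1) + 1 by omega)
        rw [key] at this
        rw [this]
        exact hw1
      · have key : ofPerm W (ofPerm u⁻¹ (ofPerm u (r * j + 1) + 1)) =
            ofPerm W (r * j + 1) + 1 := by
          rw [hW, ofPerm_upPerm_lt hr hK hv hq2M, hq2, ← hW, hWj]
          rcases Nat.lt_or_ge (ofPerm u (r * j + 1)) v with hav | hav
          · rw [if_pos (by omega), if_pos hav]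
          · rw [if_neg (by omega), if_neg (by omega)]
        have := ofPerm_inv_ofPerm W (show ofPerm u⁻¹ (ofPerm u (r * j + 1) + 1) < r * (K+1) + 1 by omega)
        rw [key] at this
        rw [this]
        exact hw2
    · -- j = K
      have hjK' : j = K := by omega
      subst hjK'
      have hWj : ofPerm W (r * j + 1) = v := by rw [hW]; exact ofPerm_upPerm_eq hr hK hv
      have hm1M : v - 1 < r * j + 1 := by omega
      have hvM : v < r * j + 1 := by omega
      have hq1 : ofPerm u (ofPerm u⁻¹ (v - 1)) = v - 1 := ofPerm_ofPerm_inv u hm1M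
      have hq2 : ofPerm u (ofPerm u⁻¹ v) = v := ofPerm_ofPerm_inv u hvM
      have hq1M : ofPerm u⁻¹ (v - 1) < r * j + 1 := ofPerm_lt u⁻¹ hm1M
      have hq2M : ofPerm u⁻¹ v < r * j + 1 := ofPerm_lt u⁻¹ hvM
      constructor
      · have key : ofPerm W (ofPerm u⁻¹ (v - 1)) = v - 1 := by
          rw [hW, ofPerm_upPerm_lt hr hK hv hq1M, hq1, if_pos (by omega)]
        have := ofPerm_inv_ofPerm W (show ofPerm u⁻¹ (v - 1) < r * (j + 1) + 1 by omega)
        rw [key] at this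
        rw [hWj, this]
        omega
      · have key : ofPerm W (ofPerm u⁻¹ v) = v + 1 := by
          rw [hW, ofPerm_upPerm_lt hr hK hv hq2M, hq2, if_neg (by omega)]
        have := ofPerm_inv_ofPerm W (show ofPerm u⁻¹ v < r * (j + 1) + 1 by omega)
        rw [key] at this
        rw [hWj, this]
        omega


lemma up_down (hr : 2 ≤ r) (hK : 1 ≤ K)
    {σ : Equiv.Perm (Fin (r * (K + 1) + 1))} (h : σ ∈ Wset r (K + 1))
    (hv : ofPerm σ (r * K + 1) ∈ allowedSet r K (downPerm hr hK h)) :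
    upPerm hr hK hv = σ := by
  have hNK : r * (K + 1) = r * K + r := by ring
  obtain ⟨hv1, hv2, hlow, htop⟩ := big_facts hr hK h
  apply perm_eq_of_ofPerm_eq
  intro i hi
  rcases Nat.lt_trichotomy i (r * K + 1) with h1 | h1 | h1
  · rw [ofPerm_upPerm_lt hr hK hv h1, ofPerm_downPerm hr hK h h1]
    have hne := wne hr hK (σ := σ) h1
    rcases Nat.lt_or_ge (ofPerm σ i) (ofPerm σ (r * K + 1)) with h2 | h2
    · rw [if_pos h2, if_pos h2]
    · rw [if_neg (show ¬ ofPerm σ i < ofPerm σ (r * K + 1) by omega)]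
      rw [if_neg (by omega)]
      omega
  · rw [h1, ofPerm_upPerm_eq hr hK hv]
  · rw [ofPerm_upPerm_gt hr hK hv h1 hi]
    have := htop (i - (r * K + 1)) (by omega) (by omega)
    have he : r * K + 1 + (i - (r * K + 1)) = i := by omega
    rw [he] at this
    omega

lemma down_up (hr : 2 ≤ r) (hK : 1 ≤ K) {u : Equiv.Perm (Fin (r * K + 1))}
    (hu : u ∈ Wset r K) {v : ℕ} (hv : v ∈ allowedSet r K u)
    (h2 : upPerm hr hK hv ∈ Wset r (K + 1)) :
    downPerm hr hK h2 = u := by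
  obtain ⟨hv1, hv2⟩ := allowed_bounds hv
  apply perm_eq_of_ofPerm_eq
  intro i hi
  rw [ofPerm_downPerm hr hK h2 hi, ofPerm_upPerm_eq hr hK hv,
    ofPerm_upPerm_lt hr hK hv hi]
  have := ofPerm_lt u hi
  rcases Nat.lt_or_ge (ofPerm u i) v with h3 | h3
  · rw [if_pos h3, if_pos h3]
  · rw [if_neg (show ¬ ofPerm u i < v by omega)]
    rw [if_neg (by omega)]
    omega

lemma card_allowed (hr : 2 ≤ r) (hK : 1 ≤ K) {u : Equiv.Perm (Fin (r * K + 1))}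
    (hu : u ∈ Wset r K) : (allowedSet r K u).card = (r - 2) * K + 2 := by
  have hucond := Wset_cond hu
  have hulast := u_last hr hK hu
  -- bounds for the forbidden values
  have hbd : ∀ j, 1 ≤ j → j ≤ K - 1 →
      1 ≤ ofPerm u (r * j + 1) ∧ ofPerm u (r * j + 1) < r * K := by
    intro j hj1 hj2
    have hjr : r * j + r ≤ r * K := by
      have : r * (j + 1) ≤ r * K := Nat.mul_le_mul_left r (by omega)
      rw [Nat.mul_add] at this; omega
    have hpM : r * j + 1 < r * K + 1 := by omega
    obtain ⟨hw1, hw2⟩ := hucond j (by simp; omega)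
    have hpa : ofPerm u⁻¹ (ofPerm u (r * j + 1)) = r * j + 1 := ofPerm_inv_ofPerm u (by omega)
    constructor
    · by_contra h0
      push_neg at h0
      have : ofPerm u (r * j + 1) - 1 = ofPerm u (r * j + 1) := by omega
      rw [this, hpa] at hw1
      omega
    · have hlt : ofPerm u (r * j + 1) < r * K + 1 := ofPerm_lt u (by omega)
      rcases Nat.eq_or_lt_of_le (show ofPerm u (r * j + 1) ≤ r * K by omega) with h' | h'
      · exfalso
        have h'' : ofPerm u (r * j + 1) = ofPerm u (r * K) := by rw [hulast]; exact h'
        have := ofPerm_injOn u hpM (by omega) h''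
        omega
      · exact h'
  -- positions of the forbidden values
  have hpos : ∀ j, 1 ≤ j → j ≤ K - 1 →
      ofPerm u⁻¹ (ofPerm u (r * j + 1)) = r * j + 1 := by
    intro j hj1 hj2
    have hjr : r * j + r ≤ r * K := by
      have : r * (j + 1) ≤ r * K := Nat.mul_le_mul_left r (by omega)
      rw [Nat.mul_add] at this; omega
    exact ofPerm_inv_ofPerm u (by omega)
  -- no two forbidden pairs overlap
  have hadj : ∀ j j', 1 ≤ j → j ≤ K - 1 → 1 ≤ j' → j' ≤ K - 1 →
      ofPerm u (r * j + 1) = ofPerm u (r * j' + 1) + 1 → False := by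
    intro j j' hj1 hj2 hj1' hj2' he
    obtain ⟨hw1, hw2⟩ := hucond j (by simp; omega)
    obtain ⟨hw1', hw2'⟩ := hucond j' (by simp; omega)
    have h1 : ofPerm u (r * j + 1) - 1 = ofPerm u (r * j' + 1) := by omega
    rw [h1, hpos j' hj1' hj2'] at hw1
    rw [← he, hpos j hj1 hj2] at hw2'
    omega
  have hinj : ∀ j j', 1 ≤ j → j ≤ K - 1 → 1 ≤ j' → j' ≤ K - 1 →
      ofPerm u (r * j + 1) = ofPerm u (r * j' + 1) → j = j' := by
    intro j j' hj1 hj2 hj1' hj2' he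
    have hjr : r * j + r ≤ r * K := by
      have : r * (j + 1) ≤ r * K := Nat.mul_le_mul_left r (by omega)
      rw [Nat.mul_add] at this; omega
    have hjr' : r * j' + r ≤ r * K := by
      have : r * (j' + 1) ≤ r * K := Nat.mul_le_mul_left r (by omega)
      rw [Nat.mul_add] at this; omega
    have := ofPerm_injOn u (show r * j + 1 < r * K + 1 by omega)
      (show r * j' + 1 < r * K + 1 by omega) he
    exact Nat.eq_of_mul_eq_mul_left (show 0 < r by omega) (show r * j = r * j' by omega)
  rw [allowedSet]
  have hsub : (Finset.Icc 1 (K - 1)).biUnion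
      (fun j => {ofPerm u (r * j + 1), ofPerm u (r * j + 1) + 1}) ⊆
      Finset.Icc 1 (r * K) := by
    intro x hx
    simp only [Finset.mem_biUnion, Finset.mem_Icc, Finset.mem_insert,
      Finset.mem_singleton] at hx
    obtain ⟨j, ⟨hj1, hj2⟩, hc⟩ := hx
    have := hbd j hj1 hj2
    simp only [Finset.mem_Icc]
    omega
  rw [Finset.card_sdiff_of_subset hsub]
  have hdisj : ∀ j ∈ Finset.Icc 1 (K - 1), ∀ j' ∈ Finset.Icc 1 (K - 1), j ≠ j' →
      Disjoint ({ofPerm u (r * j + 1), ofPerm u (r * j + 1) + 1} : Finset ℕ)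
        {ofPerm u (r * j' + 1), ofPerm u (r * j' + 1) + 1} := by
    intro j hj j' hj' hne
    simp only [Finset.mem_Icc] at hj hj'
    rw [Finset.disjoint_left]
    intro x hx hx'
    simp only [Finset.mem_insert, Finset.mem_singleton] at hx hx'
    rcases hx with h1 | h1 <;> rcases hx' with h2 | h2
    · exact hne (hinj j j' hj.1 hj.2 hj'.1 hj'.2 (by omega))
    · exact hadj j j' hj.1 hj.2 hj'.1 hj'.2 (by omega)
    · exact hadj j' j hj'.1 hj'.2 hj.1 hj.2 (by omega)
    · exact hne (hinj j j' hj.1 hj.2 hj'.1 hj'.2 (by omega))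
  rw [Finset.card_biUnion hdisj]
  have hcard2 : ∀ j ∈ Finset.Icc 1 (K - 1),
      ({ofPerm u (r * j + 1), ofPerm u (r * j + 1) + 1} : Finset ℕ).card = 2 := by
    intro j hj
    rw [Finset.card_insert_of_notMem (by simp), Finset.card_singleton]
  rw [Finset.sum_congr rfl hcard2, Finset.sum_const, Nat.card_Icc, Nat.card_Icc]
  simp only [smul_eq_mul]
  obtain ⟨r', rfl⟩ := Nat.exists_eq_add_of_le hr
  have h1 : (2 + r') * K = 2 * K + r' * K := by ring
  have h2 : 2 + r' - 2 = r' := by omega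
  rw [h2]
  omega

lemma step (hr : 2 ≤ r) (hK : 1 ≤ K) :
    (Wset r (K + 1)).card = (Wset r K).card * ((r - 2) * K + 2) := by
  have hbij : (Wset r (K + 1)).card =
      ((Wset r K).sigma (fun u => allowedSet r K u)).card := by
    refine Finset.card_bij'
      (fun σ h => (⟨downPerm hr hK h, ofPerm σ (r * K + 1)⟩ :
        (_ : Equiv.Perm (Fin (r * K + 1))) × ℕ))
      (fun p hp => upPerm hr hK (Finset.mem_sigma.mp hp).2) ?_ ?_ ?_ ?_
    · intro σ h
      exact Finset.mem_sigma.mpr ⟨down_mem hr hK h, v_mem hr hK h⟩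
    · intro p hp
      exact up_mem hr hK (Finset.mem_sigma.mp hp).1 (Finset.mem_sigma.mp hp).2
    · intro σ h
      exact up_down hr hK h _
    · intro p hp
      obtain ⟨u, v⟩ := p
      have h1 := (Finset.mem_sigma.mp hp).1
      have h2 := (Finset.mem_sigma.mp hp).2
      apply Sigma.ext
      · exact down_up hr hK h1 h2 (up_mem hr hK h1 h2)
      · exact heq_of_eq (ofPerm_upPerm_eq hr hK h2)
  rw [hbij, Finset.card_sigma,
    Finset.sum_congr rfl (fun u hu => card_allowed hr hK hu), Finset.sum_const,
    smul_eq_mul, Nat.mul_comm]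

end Step

lemma wset_card {r : ℕ} (hr : 2 ≤ r) :
    ∀ K : ℕ, (Wset r (K + 1)).card = ∏ j ∈ Finset.Icc 1 K, ((r - 2) * j + 2) := by
  intro K
  induction K with
  | zero =>
    rw [wset_one hr]
    rw [Finset.Icc_eq_empty (by omega), Finset.prod_empty]
  | succ K ih =>
    rw [step hr (by omega : 1 ≤ K + 1), ih,
      Finset.prod_Icc_succ_top (by omega : 1 ≤ K + 1)]



end Stmt10

/-- the number of `π ∈ S_{rk+1}` with `π⁻¹` a `2134⋯(r+1)`-cluster and
exactly `k-1` peaks equals `∏_{j=1}^{k-1} ((r-2)j + 2)`. -/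
theorem stmt10 (r k : ℕ) (hr : 2 ≤ r) (hk : 1 ≤ k) :
    ((clusterSet r k).filter (fun π => pkNum (r * k + 1) (ofPerm π) = k - 1)).card =
      Finset.prod (Finset.Icc 1 (k - 1)) (fun j => (r - 2) * j + 2) := by
  obtain ⟨K, rfl⟩ : ∃ K, k = K + 1 := ⟨k - 1, by omega⟩
  have hKk : K + 1 - 1 = K := by omega
  rw [hKk, ← Stmt10.wset_card hr K]
  apply Finset.card_bij (fun π _ => π⁻¹)
  · intro π hπ
    simp only [clusterSet, Finset.mem_filter, Finset.mem_univ, true_and] at hπ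
    obtain ⟨hc, hpk⟩ := hπ
    refine Stmt10.Wset_mem hc ?_
    have hiff := Stmt10.pk_iff hr (show 1 ≤ K + 1 by omega) hc
    rw [inv_inv] at hiff
    exact hiff.mp hpk
  · intro a ha b hb h
    exact inv_injective h
  · intro σ hσ
    refine ⟨σ⁻¹, ?_, inv_inv σ⟩
    simp only [clusterSet, Finset.mem_filter, Finset.mem_univ, true_and]
    have hc : IsCluster r (K + 1) (ofPerm σ) := Stmt10.Wset_cluster hσ
    constructor
    · rw [inv_inv]; exact hc
    · exact (Stmt10.pk_iff hr (show 1 ≤ K + 1 by omega) hc).mpr (Stmt10.Wset_cond hσ)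
end
end

section
/- For all r ≥ 2 and k ≥ 1, the number of r-Stirling permutations of order k with exactly k-1 ascent-plateaus equals ∏_{j=1}^{k-1} ((r-2)j + 2). -/
open scoped Classical

noncomputable section

/-- 1-based word (positions 0,…,n-1, letters 1,…,k) of a function `Fin n → Fin k`. -/
def ofWord {n k : ℕ} (ρ : Fin n → Fin k) : ℕ → ℕ :=
  fun i => if h : i < n then (ρ ⟨i, h⟩ : ℕ) + 1 else 0

/-- `r`-Stirling permutations of order `k`: words over `{1^r,…,k^r}` such that between
any two equal letters all letters are at least as large. -/
def stirlingSet (r k : ℕ) : Finset (Fin (r * k) → Fin k) :=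
  Finset.univ.filter (fun ρ =>
    (∀ a : Fin k, (Finset.univ.filter (fun i => ρ i = a)).card = r) ∧
    (∀ i l j : Fin (r * k), i < l → l < j → ρ i = ρ j → ρ i ≤ ρ l))

/-- Number of leading plateaus of a word of length `n`. -/
def lplatNum (n : ℕ) (w : ℕ → ℕ) : ℕ :=
  ((Finset.range (n - 1)).filter (fun i => w i = w (i + 1) ∧ ∀ j < i, w j ≠ w i)).card

/-- Number of ascent-plateaus of a word of length `n`. -/
def ascplatNum (n : ℕ) (w : ℕ → ℕ) : ℕ :=
  ((Finset.Ico 1 (n - 1)).filter (fun i => w (i - 1) < w i ∧ w i = w (i + 1))).card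

/-- Number of left ascent-plateaus of a word of length `n`. -/
def lascplatNum (n : ℕ) (w : ℕ → ℕ) : ℕ :=
  ((Finset.range (n - 1)).filter
    (fun i => (1 ≤ i ∧ w (i - 1) < w i ∧ w i = w (i + 1)) ∨ (i = 0 ∧ w 0 = w 1))).card

namespace S11


/-- insert `r` copies of `K` at gap `q` -/
def insW (r q K : ℕ) (w : ℕ → ℕ) : ℕ → ℕ :=
  fun i => if i < q then w i else if i < q + r then K else w (i - r)

def apSet (n : ℕ) (w : ℕ → ℕ) : Finset ℕ :=
  (Finset.Ico 1 (n - 1)).filter (fun i => w (i - 1) < w i ∧ w i = w (i + 1))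

lemma insW_lt {r q K : ℕ} {w : ℕ → ℕ} {i : ℕ} (h : i < q) : insW r q K w i = w i := by
  simp only [insW, if_pos h]

lemma insW_mid {r q K : ℕ} {w : ℕ → ℕ} {i : ℕ} (h1 : q ≤ i) (h2 : i < q + r) :
    insW r q K w i = K := by
  simp only [insW]
  rw [if_neg (by omega), if_pos h2]

lemma insW_ge {r q K : ℕ} {w : ℕ → ℕ} {i : ℕ} (h : q + r ≤ i) :
    insW r q K w i = w (i - r) := by
  simp only [insW]
  rw [if_neg (by omega), if_neg (by omega)]

lemma mem_apSet {n : ℕ} {w : ℕ → ℕ} {i : ℕ} :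
    i ∈ apSet n w ↔ (1 ≤ i ∧ i < n - 1) ∧ w (i - 1) < w i ∧ w i = w (i + 1) := by
  simp [apSet, Finset.mem_filter, Finset.mem_Ico, and_assoc]

lemma apSet_insW {r K n p : ℕ} (w : ℕ → ℕ) (hr : 2 ≤ r) (hp : p ≤ n)
    (hw : ∀ i, w i < K) :
    apSet (n + r) (insW r p K w)
      = (((apSet n w).filter (fun i => i + 1 < p)
         ∪ ((apSet n w).filter (fun i => p < i)).image (· + r))
        ∪ (if 1 ≤ p then {p} else ∅)) := by
  ext i
  simp only [Finset.mem_union, Finset.mem_filter, Finset.mem_image, mem_apSet]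
  constructor
  · rintro ⟨⟨hi1, hi2⟩, h1, h2⟩
    by_cases c1 : i + 1 < p
    · left; left
      rw [insW_lt (show i - 1 < p by omega), insW_lt (show i < p by omega)] at h1
      rw [insW_lt (show i < p by omega), insW_lt (show i + 1 < p by omega)] at h2
      exact ⟨⟨⟨hi1, by omega⟩, h1, h2⟩, c1⟩
    by_cases c2 : i + 1 = p
    · exfalso
      rw [insW_lt (by omega), insW_mid (by omega) (by omega)] at h2
      exact absurd (h2 ▸ hw i) (lt_irrefl K)
    by_cases c3 : i = p
    · right; simp [show 1 ≤ p by omega, c3]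
    by_cases c4 : p < i ∧ i < p + r
    · exfalso
      rw [insW_mid (by omega) (by omega), insW_mid (by omega) (by omega)] at h1
      exact lt_irrefl K h1
    by_cases c5 : i = p + r
    · exfalso
      rw [insW_mid (by omega) (by omega), insW_ge (by omega)] at h1
      exact absurd (h1.trans (hw (i - r))) (lt_irrefl K)
    · -- i > p + r
      left; right
      refine ⟨i - r, ⟨⟨⟨by omega, by omega⟩, ?_, ?_⟩, by omega⟩, by omega⟩
      · rw [insW_ge (by omega), insW_ge (by omega)] at h1
        rw [show i - 1 - r = i - r - 1 by omega] at h1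
        exact h1
      · rw [insW_ge (by omega), insW_ge (by omega)] at h2
        rw [show i + 1 - r = i - r + 1 by omega] at h2
        exact h2
  · rintro ((⟨⟨⟨hi1, hi2⟩, h1, h2⟩, hc⟩ | ⟨j, ⟨⟨⟨hj1, hj2⟩, h1, h2⟩, hc⟩, rfl⟩) | hc)
    · refine ⟨⟨hi1, by omega⟩, ?_, ?_⟩
      · rwa [insW_lt (show i - 1 < p by omega), insW_lt (show i < p by omega)]
      · rwa [insW_lt (show i < p by omega), insW_lt (show i + 1 < p by omega)]
    · refine ⟨⟨by omega, by omega⟩, ?_, ?_⟩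
      · rw [insW_ge (by omega), insW_ge (by omega),
          show j + r - 1 - r = j - 1 by omega, show j + r - r = j by omega]
        exact h1
      · rw [insW_ge (by omega), insW_ge (by omega),
          show j + r - r = j by omega, show j + r + 1 - r = j + 1 by omega]
        exact h2
    · have hp1 : 1 ≤ p := by
        by_contra h
        rw [if_neg h] at hc
        exact absurd hc (Finset.notMem_empty i)
      rw [if_pos hp1, Finset.mem_singleton] at hc
      subst hc
      refine ⟨⟨hp1, by omega⟩, ?_, ?_⟩
      · rw [insW_lt (by omega), insW_mid (by omega) (by omega)]
        exact hw _
      · rw [insW_mid (by omega) (by omega), insW_mid (by omega) (by omega)]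

end S11

namespace S11

lemma no_consec {n : ℕ} {w : ℕ → ℕ} {i : ℕ} (h : i ∈ apSet n w) : i + 1 ∉ apSet n w := by
  rw [mem_apSet] at h
  rw [mem_apSet]
  rintro ⟨-, h1, -⟩
  rw [show i + 1 - 1 = i by omega] at h1
  omega

lemma ap_insW {r K n p : ℕ} (w : ℕ → ℕ) (hr : 2 ≤ r) (hp : p ≤ n)
    (hw : ∀ i, w i < K) :
    (apSet (n + r) (insW r p K w)).card
      = ((apSet n w).filter (fun i => i + 1 < p)).card
        + ((apSet n w).filter (fun i => p < i)).card
        + (if 1 ≤ p then 1 else 0) := by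
  rw [apSet_insW w hr hp hw]
  rw [Finset.card_union_of_disjoint, Finset.card_union_of_disjoint,
    Finset.card_image_of_injOn (Set.InjOn.mono (Set.subset_univ _)
      (add_left_injective r).injOn)]
  · split
    · rw [Finset.card_singleton]
    · rw [Finset.card_empty]
  · -- A disjoint from image B
    rw [Finset.disjoint_left]
    intro x hx hx'
    rw [Finset.mem_filter] at hx
    rw [Finset.mem_image] at hx'
    obtain ⟨j, hj, rfl⟩ := hx'
    rw [Finset.mem_filter] at hj
    omega
  · -- (A ∪ B') disjoint from C
    rw [Finset.disjoint_left]
    intro x hx hx'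
    split at hx'
    · rw [Finset.mem_singleton] at hx'
      subst hx'
      rw [Finset.mem_union, Finset.mem_filter, Finset.mem_image] at hx
      rcases hx with h | ⟨j, hj, hj2⟩
      · omega
      · rw [Finset.mem_filter] at hj
        omega
    · exact absurd hx' (Finset.notMem_empty x)

lemma ap_insW_le {r K n p : ℕ} (w : ℕ → ℕ) (hr : 2 ≤ r) (hp : p ≤ n)
    (hw : ∀ i, w i < K) :
    (apSet (n + r) (insW r p K w)).card
      ≤ (apSet n w).card + (if 1 ≤ p then 1 else 0) := by
  rw [ap_insW w hr hp hw]
  have h1 : ((apSet n w).filter (fun i => i + 1 < p)).card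
      + ((apSet n w).filter (fun i => p < i)).card
      = (((apSet n w).filter (fun i => i + 1 < p))
        ∪ ((apSet n w).filter (fun i => p < i))).card := by
    rw [Finset.card_union_of_disjoint]
    rw [Finset.disjoint_left]
    intro x hx hx'
    rw [Finset.mem_filter] at hx hx'
    omega
  have h2 : (((apSet n w).filter (fun i => i + 1 < p))
        ∪ ((apSet n w).filter (fun i => p < i))) ⊆ apSet n w := by
    intro x hx
    rw [Finset.mem_union, Finset.mem_filter, Finset.mem_filter] at hx
    tauto
  have := Finset.card_le_card h2
  omega

lemma ap_insW_char {r K n p : ℕ} (w : ℕ → ℕ) (hr : 2 ≤ r) (hp : p ≤ n)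
    (hw : ∀ i, w i < K) :
    (apSet (n + r) (insW r p K w)).card = (apSet n w).card + 1
      ↔ (1 ≤ p ∧ p ∉ apSet n w ∧ ∀ i ∈ apSet n w, i + 1 ≠ p) := by
  rw [ap_insW w hr hp hw]
  have hsplit : (apSet n w).card
      = ((apSet n w).filter (fun i => i + 1 < p)).card
        + ((apSet n w).filter (fun i => p < i)).card
        + ((apSet n w).filter (fun i => ¬(i + 1 < p) ∧ ¬(p < i))).card := by
    have h1 := Finset.card_filter_add_card_filter_not
      (s := apSet n w) (p := fun i => i + 1 < p)
    have h2 := Finset.card_filter_add_card_filter_not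
      (s := (apSet n w).filter (fun i => ¬(i + 1 < p))) (p := fun i => p < i)
    rw [Finset.filter_filter, Finset.filter_filter] at h2
    have e1 : (apSet n w).filter (fun i => ¬(i + 1 < p) ∧ p < i)
        = (apSet n w).filter (fun i => p < i) := by
      apply Finset.filter_congr
      intro x _
      constructor
      · tauto
      · intro h; exact ⟨by omega, h⟩
    rw [e1] at h2
    omega
  have hM : ((apSet n w).filter (fun i => ¬(i + 1 < p) ∧ ¬(p < i))).card = 0
      ↔ (p ∉ apSet n w ∧ ∀ i ∈ apSet n w, i + 1 ≠ p) := by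
    rw [Finset.card_eq_zero, Finset.filter_eq_empty_iff]
    constructor
    · intro h
      constructor
      · intro hpmem
        have := h hpmem
        omega
      · intro i hi hip
        have := h hi
        omega
    · rintro ⟨h1, h2⟩ x hx
      by_contra hcon
      push_neg at hcon
      have hx1 : x = p ∨ x + 1 = p := by omega
      rcases hx1 with rfl | he
      · exact h1 hx
      · exact h2 x hx he
  constructor
  · intro h
    have hε : (if 1 ≤ p then 1 else 0)
        = ((apSet n w).filter (fun i => ¬(i + 1 < p) ∧ ¬(p < i))).card + 1 := by omega
    have hp1 : 1 ≤ p := by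
      by_contra hc
      rw [if_neg hc] at hε
      omega
    rw [if_pos hp1] at hε
    exact ⟨hp1, hM.1 (by omega)⟩
  · rintro ⟨hp1, h2⟩
    rw [if_pos hp1]
    have := hM.2 h2
    omega

end S11

namespace S11

lemma count_good {r K n : ℕ} (w : ℕ → ℕ) (hr : 2 ≤ r) (hw : ∀ i, w i < K) :
    ((Finset.range (n + 1)).filter
        (fun p => (apSet (n + r) (insW r p K w)).card = (apSet n w).card + 1)).card
      + (1 + 2 * (apSet n w).card) = n + 1 := by
  set bad : Finset ℕ := insert 0 ((apSet n w) ∪ (apSet n w).image (· + 1)) with hbad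
  have hbadcard : bad.card = 1 + 2 * (apSet n w).card := by
    rw [hbad, Finset.card_insert_of_notMem, Finset.card_union_of_disjoint,
      Finset.card_image_of_injective _ (add_left_injective 1)]
    · omega
    · rw [Finset.disjoint_left]
      intro x hx hx'
      rw [Finset.mem_image] at hx'
      obtain ⟨j, hj, rfl⟩ := hx'
      exact no_consec hj hx
    · rw [Finset.mem_union, Finset.mem_image]
      rintro (h | ⟨j, hj, hj2⟩)
      · rw [mem_apSet] at h; omega
      · omega
  have hsub : bad ⊆ Finset.range (n + 1) := by
    intro x hx
    rw [hbad, Finset.mem_insert, Finset.mem_union, Finset.mem_image] at hx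
    rw [Finset.mem_range]
    rcases hx with rfl | h | ⟨j, hj, rfl⟩
    · omega
    · rw [mem_apSet] at h; omega
    · rw [mem_apSet] at hj; omega
  have hfe : (Finset.range (n + 1)).filter
      (fun p => (apSet (n + r) (insW r p K w)).card = (apSet n w).card + 1)
      = Finset.range (n + 1) \ bad := by
    ext p
    rw [Finset.mem_filter, Finset.mem_sdiff, Finset.mem_range]
    constructor
    · rintro ⟨hp, hgood⟩
      rw [ap_insW_char w hr (by omega) hw] at hgood
      obtain ⟨hp1, hp2, hp3⟩ := hgood
      refine ⟨by omega, ?_⟩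
      rw [hbad, Finset.mem_insert, Finset.mem_union, Finset.mem_image]
      rintro (rfl | h | ⟨j, hj, hjp⟩)
      · omega
      · exact hp2 h
      · exact hp3 j hj hjp
    · rintro ⟨hp, hnb⟩
      rw [hbad, Finset.mem_insert, Finset.mem_union, Finset.mem_image] at hnb
      push_neg at hnb
      obtain ⟨h0, h1, h2⟩ := hnb
      refine ⟨hp, ?_⟩
      rw [ap_insW_char w hr (by omega) hw]
      exact ⟨by omega, h1, fun i hi hip => h2 i hi hip⟩
  rw [hfe, Finset.card_sdiff_of_subset hsub]
  have := Finset.card_le_card hsub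
  rw [Finset.card_range] at *
  omega

end S11

namespace S11

/-- insert the block of `r` copies of the new top letter at gap `p` -/
def insF {r k : ℕ} (ρ : Fin (r * k) → Fin k) (p : ℕ) : Fin (r * (k + 1)) → Fin (k + 1) :=
  fun i =>
    if h : (i : ℕ) < p ∧ (i : ℕ) < r * k then (ρ ⟨i, h.2⟩).castSucc
    else if h2 : (i : ℕ) < p + r then Fin.last k
    else (ρ ⟨(i : ℕ) - r, by
      have hi := i.isLt
      have hm : r * (k + 1) = r * k + r := by ring
      omega⟩).castSucc

def embF (r k p : ℕ) (j : Fin (r * k)) : Fin (r * (k + 1)) :=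
  ⟨if (j : ℕ) < p then (j : ℕ) else (j : ℕ) + r, by
    have hj := j.isLt
    have hm : r * (k + 1) = r * k + r := by ring
    split_ifs <;> omega⟩

def invF {r k : ℕ} (p : ℕ) (hp : p ≤ r * k) (i : Fin (r * (k + 1)))
    (h : (i : ℕ) < p ∨ p + r ≤ (i : ℕ)) : Fin (r * k) :=
  ⟨if (i : ℕ) < p then (i : ℕ) else (i : ℕ) - r, by
    have hi := i.isLt
    have hm : r * (k + 1) = r * k + r := by ring
    split_ifs <;> omega⟩

lemma embF_val (r k p : ℕ) (j : Fin (r * k)) :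
    (embF r k p j : ℕ) = if (j : ℕ) < p then (j : ℕ) else (j : ℕ) + r := rfl

lemma invF_val {r k : ℕ} (p : ℕ) (hp : p ≤ r * k) (i : Fin (r * (k + 1))) (h) :
    (invF p hp i h : ℕ) = if (i : ℕ) < p then (i : ℕ) else (i : ℕ) - r := rfl

lemma embF_out {r k : ℕ} (p : ℕ) (j : Fin (r * k)) :
    (embF r k p j : ℕ) < p ∨ p + r ≤ (embF r k p j : ℕ) := by
  rw [embF_val]
  split_ifs <;> omega

lemma insF_lt {r k : ℕ} (ρ : Fin (r * k) → Fin k) {p : ℕ} (hp : p ≤ r * k)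
    (i : Fin (r * (k + 1))) (h : (i : ℕ) < p) :
    insF ρ p i = (ρ ⟨(i : ℕ), by omega⟩).castSucc := by
  simp only [insF]
  rw [dif_pos ⟨h, by omega⟩]

lemma insF_mid {r k : ℕ} (ρ : Fin (r * k) → Fin k) {p : ℕ}
    (i : Fin (r * (k + 1))) (h1 : p ≤ (i : ℕ)) (h2 : (i : ℕ) < p + r) :
    insF ρ p i = Fin.last k := by
  simp only [insF]
  rw [dif_neg (by omega), dif_pos h2]

lemma insF_ge {r k : ℕ} (ρ : Fin (r * k) → Fin k) {p : ℕ} (hp : p ≤ r * k)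
    (i : Fin (r * (k + 1))) (h : p + r ≤ (i : ℕ)) :
    insF ρ p i = (ρ ⟨(i : ℕ) - r, by
      have hi := i.isLt
      have hm : r * (k + 1) = r * k + r := by ring
      omega⟩).castSucc := by
  simp only [insF]
  rw [dif_neg (by omega), dif_neg (by omega)]

lemma insF_embF {r k : ℕ} (ρ : Fin (r * k) → Fin k) {p : ℕ} (hp : p ≤ r * k)
    (j : Fin (r * k)) : insF ρ p (embF r k p j) = (ρ j).castSucc := by
  by_cases c : (j : ℕ) < p
  · rw [insF_lt ρ hp _ (by rw [embF_val, if_pos c]; exact c)]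
    exact congrArg _ (congrArg ρ (Fin.ext (by rw [embF_val, if_pos c])))
  · have hv : (embF r k p j : ℕ) = (j : ℕ) + r := by rw [embF_val, if_neg c]
    rw [insF_ge ρ hp _ (by omega)]
    exact congrArg _ (congrArg ρ (Fin.ext (by show (embF r k p j : ℕ) - r = (j : ℕ); omega)))

lemma insF_eq_last_iff {r k : ℕ} (ρ : Fin (r * k) → Fin k) {p : ℕ} (hp : p ≤ r * k)
    (i : Fin (r * (k + 1))) :
    insF ρ p i = Fin.last k ↔ p ≤ (i : ℕ) ∧ (i : ℕ) < p + r := by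
  constructor
  · intro h
    by_contra hc
    have hc' : (i : ℕ) < p ∨ p + r ≤ (i : ℕ) := by omega
    rcases hc' with hc' | hc'
    · rw [insF_lt ρ hp i hc'] at h
      exact absurd h (Fin.castSucc_lt_last _).ne
    · rw [insF_ge ρ hp i hc'] at h
      exact absurd h (Fin.castSucc_lt_last _).ne
  · rintro ⟨h1, h2⟩
    exact insF_mid ρ i h1 h2

lemma insF_notblock {r k : ℕ} (ρ : Fin (r * k) → Fin k) {p : ℕ} (hp : p ≤ r * k)
    (i : Fin (r * (k + 1))) (h : (i : ℕ) < p ∨ p + r ≤ (i : ℕ)) :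
    insF ρ p i = (ρ (invF p hp i h)).castSucc := by
  rcases h with h' | h'
  · rw [insF_lt ρ hp i h']
    refine congrArg _ (congrArg ρ (Fin.ext ?_))
    rw [invF_val]
    simp [if_pos h']
  · rw [insF_ge ρ hp i h']
    refine congrArg _ (congrArg ρ (Fin.ext ?_))
    rw [invF_val]
    simp only [if_neg (by omega : ¬ (i : ℕ) < p)]

lemma invF_embF {r k : ℕ} {p : ℕ} (hp : p ≤ r * k) (j : Fin (r * k)) (h) :
    invF p hp (embF r k p j) h = j := by
  apply Fin.ext
  rw [invF_val, embF_val]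
  split_ifs <;> omega

lemma embF_invF {r k : ℕ} {p : ℕ} (hp : p ≤ r * k) (i : Fin (r * (k + 1)))
    (h : (i : ℕ) < p ∨ p + r ≤ (i : ℕ)) :
    embF r k p (invF p hp i h) = i := by
  apply Fin.ext
  rw [embF_val, invF_val]
  split_ifs <;> omega

lemma ofWord_insF {r k : ℕ} (ρ : Fin (r * k) → Fin k) {p : ℕ} (hp : p ≤ r * k) :
    ofWord (insF ρ p) = insW r p (k + 1) (ofWord ρ) := by
  have hm : r * (k + 1) = r * k + r := by ring
  funext i
  by_cases c1 : i < p
  · rw [insW_lt c1]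
    unfold ofWord
    rw [dif_pos (show i < r * (k + 1) by omega), dif_pos (show i < r * k by omega)]
    rw [insF_lt ρ hp _ c1]
    simp
  · by_cases c2 : i < p + r
    · rw [insW_mid (by omega) c2]
      unfold ofWord
      rw [dif_pos (show i < r * (k + 1) by omega)]
      rw [insF_mid ρ ⟨i, by omega⟩ (by show p ≤ i; omega) c2]
      simp
    · rw [insW_ge (by omega)]
      by_cases c3 : i < r * (k + 1)
      · unfold ofWord
        rw [dif_pos c3, dif_pos (show i - r < r * k by omega)]
        rw [insF_ge ρ hp ⟨i, c3⟩ (by show p + r ≤ i; omega)]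
        simp
      · unfold ofWord
        rw [dif_neg c3, dif_neg (show ¬ i - r < r * k by omega)]

lemma insF_inj {r k : ℕ} (hr : 1 ≤ r) {ρ ρ' : Fin (r * k) → Fin k} {p p' : ℕ}
    (hp : p ≤ r * k) (hp' : p' ≤ r * k) (h : insF ρ p = insF ρ' p') :
    p = p' ∧ ρ = ρ' := by
  have hm : r * (k + 1) = r * k + r := by ring
  have hpp : p = p' := by
    have e1 : insF ρ' p' ⟨p, by omega⟩ = Fin.last k := by
      rw [← h]
      exact insF_mid ρ _ (le_refl _) (by show p < p + r; omega)
    have e2 : insF ρ p ⟨p', by omega⟩ = Fin.last k := by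
      rw [h]
      exact insF_mid ρ' _ (le_refl _) (by show p' < p' + r; omega)
    have f1 := (insF_eq_last_iff ρ' hp' _).1 e1
    have f2 := (insF_eq_last_iff ρ hp _).1 e2
    simp only [] at f1 f2
    omega
  subst hpp
  refine ⟨rfl, ?_⟩
  funext j
  have := congrFun h (embF r k p j)
  rw [insF_embF ρ hp, insF_embF ρ' hp] at this
  exact Fin.castSucc_injective _ this

end S11

namespace S11

lemma mem_stirl_iff {r k : ℕ} {ρ : Fin (r * k) → Fin k} :
    ρ ∈ stirlingSet r k ↔
      (∀ a : Fin k, (Finset.univ.filter (fun i => ρ i = a)).card = r) ∧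
      (∀ i l j : Fin (r * k), i < l → l < j → ρ i = ρ j → ρ i ≤ ρ l) := by
  simp [stirlingSet]

lemma card_filter_insF_last {r k : ℕ} (ρ : Fin (r * k) → Fin k) {p : ℕ} (hp : p ≤ r * k) :
    (Finset.univ.filter (fun i => insF ρ p i = Fin.last k)).card = r := by
  have hm : r * (k + 1) = r * k + r := by ring
  have key : (Finset.univ.filter (fun i => insF ρ p i = Fin.last k)).card
      = (Finset.Ico p (p + r)).card := by
    refine Finset.card_bij' (fun x _ => (x : ℕ))
      (fun m hm' => (⟨m, by have := Finset.mem_Ico.1 hm'; omega⟩ : Fin (r * (k + 1))))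
      ?_ ?_ ?_ ?_
    · intro x hx
      have := (insF_eq_last_iff ρ hp x).1 (Finset.mem_filter.1 hx).2
      exact Finset.mem_Ico.2 this
    · intro m hm'
      have h' := Finset.mem_Ico.1 hm'
      refine Finset.mem_filter.2 ⟨Finset.mem_univ _, ?_⟩
      exact insF_mid ρ _ h'.1 h'.2
    · intro x _
      exact Fin.ext rfl
    · intro m _
      rfl
  rw [key, Nat.card_Ico]
  omega

lemma card_filter_insF_castSucc {r k : ℕ} (ρ : Fin (r * k) → Fin k) {p : ℕ}
    (hp : p ≤ r * k) (b : Fin k) :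
    (Finset.univ.filter (fun i => insF ρ p i = b.castSucc)).card
      = (Finset.univ.filter (fun j => ρ j = b)).card := by
  have hout : ∀ x ∈ Finset.univ.filter (fun i => insF ρ p i = b.castSucc),
      ((x : ℕ) < p ∨ p + r ≤ (x : ℕ)) := by
    intro x hx
    by_contra hc
    have hx' := (Finset.mem_filter.1 hx).2
    rw [insF_mid ρ x (by omega) (by omega)] at hx'
    exact (Fin.castSucc_lt_last b).ne' hx'
  refine Finset.card_bij' (fun x hx => invF p hp x (hout x hx))
    (fun j _ => embF r k p j) ?_ ?_ ?_ ?_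
  · intro x hx
    have he := insF_notblock ρ hp x (hout x hx)
    have hx' := (Finset.mem_filter.1 hx).2
    rw [he] at hx'
    exact Finset.mem_filter.2 ⟨Finset.mem_univ _, Fin.castSucc_injective _ hx'⟩
  · intro j hj
    refine Finset.mem_filter.2 ⟨Finset.mem_univ _, ?_⟩
    rw [insF_embF ρ hp j, (Finset.mem_filter.1 hj).2]
  · intro x hx
    exact embF_invF hp x (hout x hx)
  · intro j _
    exact invF_embF hp j _

lemma insF_mem_stirl {r k : ℕ} (hr : 1 ≤ r) {ρ : Fin (r * k) → Fin k} {p : ℕ}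
    (hρ : ρ ∈ stirlingSet r k) (hp : p ≤ r * k) :
    insF ρ p ∈ stirlingSet r (k + 1) := by
  rw [mem_stirl_iff] at hρ ⊢
  obtain ⟨hc, hb⟩ := hρ
  constructor
  · intro a
    induction a using Fin.lastCases with
    | last => exact card_filter_insF_last ρ hp
    | cast b => rw [card_filter_insF_castSucc ρ hp b]; exact hc b
  · intro i l j hil hlj hij
    have h1 : (i : ℕ) < (l : ℕ) := hil
    have h2 : (l : ℕ) < (j : ℕ) := hlj
    by_cases hib : p ≤ (i : ℕ) ∧ (i : ℕ) < p + r
    · have hi' : insF ρ p i = Fin.last k := insF_mid ρ i hib.1 hib.2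
      have hj' : insF ρ p j = Fin.last k := hij ▸ hi'
      have hjb := (insF_eq_last_iff ρ hp j).1 hj'
      rw [hi', insF_mid ρ l (by omega) (by omega)]
    · have houti : (i : ℕ) < p ∨ p + r ≤ (i : ℕ) := by omega
      have hjne : insF ρ p j ≠ Fin.last k := by
        intro hcon
        exact hib ((insF_eq_last_iff ρ hp i).1 (hij.trans hcon))
      have houtj : (j : ℕ) < p ∨ p + r ≤ (j : ℕ) := by
        by_contra hcj
        exact hjne (insF_mid ρ j (by omega) (by omega))
      by_cases hlb : p ≤ (l : ℕ) ∧ (l : ℕ) < p + r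
      · rw [insF_mid ρ l hlb.1 hlb.2]
        exact Fin.le_last _
      · have houtl : (l : ℕ) < p ∨ p + r ≤ (l : ℕ) := by omega
        rw [insF_notblock ρ hp i houti, insF_notblock ρ hp l houtl]
        have hij' : ρ (invF p hp i houti) = ρ (invF p hp j houtj) := by
          have h3 := hij
          rw [insF_notblock ρ hp i houti, insF_notblock ρ hp j houtj] at h3
          exact Fin.castSucc_injective _ h3
        have hlt1 : invF p hp i houti < invF p hp l houtl := by
          rw [Fin.lt_def, invF_val, invF_val]
          split_ifs <;> omega
        have hlt2 : invF p hp l houtl < invF p hp j houtj := by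
          rw [Fin.lt_def, invF_val, invF_val]
          split_ifs <;> omega
        exact Fin.castSucc_le_castSucc_iff.2 (hb _ _ _ hlt1 hlt2 hij')

lemma exists_delete {r k : ℕ} (hr : 1 ≤ r) {ρ : Fin (r * (k + 1)) → Fin (k + 1)}
    (hρ : ρ ∈ stirlingSet r (k + 1)) :
    ∃ p ≤ r * k, ∃ σ ∈ stirlingSet r k, ρ = insF σ p := by
  rw [mem_stirl_iff] at hρ
  obtain ⟨hc, hb⟩ := hρ
  have hm : r * (k + 1) = r * k + r := by ring
  set B := Finset.univ.filter (fun i => ρ i = Fin.last k) with hB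
  have hBcard : B.card = r := hc _
  have hBne : B.Nonempty := by
    rw [← Finset.card_pos, hBcard]; omega
  set pm := B.min' hBne with hpm
  set mm := B.max' hBne with hmm
  have hpmem : pm ∈ B := B.min'_mem hBne
  have hmmem : mm ∈ B := B.max'_mem hBne
  have hpl : ρ pm = Fin.last k := (Finset.mem_filter.1 hpmem).2
  have hml : ρ mm = Fin.last k := (Finset.mem_filter.1 hmmem).2
  have hconv : ∀ i : Fin (r * (k + 1)), pm ≤ i → i ≤ mm → ρ i = Fin.last k := by
    intro i hl1 hl2
    rcases eq_or_lt_of_le hl1 with he | hlt1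
    · rw [← he]; exact hpl
    rcases eq_or_lt_of_le hl2 with he | hlt2
    · rw [he]; exact hml
    have := hb pm i mm hlt1 hlt2 (hpl.trans hml.symm)
    rw [hpl] at this
    exact le_antisymm (Fin.le_last _) this
  have hBe : B = Finset.Icc pm mm := by
    ext i
    rw [Finset.mem_Icc]
    constructor
    · intro h
      exact ⟨B.min'_le i h, B.le_max' i h⟩
    · rintro ⟨hl1, hl2⟩
      exact Finset.mem_filter.2 ⟨Finset.mem_univ _, hconv i hl1 hl2⟩
  have hpmm : pm ≤ mm := B.min'_le mm hmmem
  have hpmm' : (pm : ℕ) ≤ (mm : ℕ) := hpmm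
  have hmmval : (mm : ℕ) + 1 = (pm : ℕ) + r := by
    rw [hBe, Fin.card_Icc] at hBcard
    omega
  set p := (pm : ℕ) with hpdef
  have hple : p + r ≤ r * (k + 1) := by
    have := mm.isLt
    omega
  have hpk : p ≤ r * k := by omega
  have hblock : ∀ i : Fin (r * (k + 1)), ρ i = Fin.last k ↔ (p ≤ (i : ℕ) ∧ (i : ℕ) < p + r) := by
    intro i
    constructor
    · intro h
      have hiB : i ∈ B := Finset.mem_filter.2 ⟨Finset.mem_univ _, h⟩
      have h1 : pm ≤ i := B.min'_le i hiB
      have h2 : i ≤ mm := B.le_max' i hiB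
      have h1' : (pm : ℕ) ≤ (i : ℕ) := h1
      have h2' : (i : ℕ) ≤ (mm : ℕ) := h2
      omega
    · rintro ⟨hl1, hl2⟩
      refine hconv i ?_ ?_
      · exact hl1
      · show (i : ℕ) ≤ (mm : ℕ)
        omega
  have hlt : ∀ j : Fin (r * k), ((ρ (embF r k p j)) : ℕ) < k := by
    intro j
    have hne : ρ (embF r k p j) ≠ Fin.last k := by
      intro hcon
      rw [hblock] at hcon
      have := embF_out p j
      have hjv := embF_val r k p j
      have hjlt := j.isLt
      rcases this with h | h <;> omega
    have hlt' := (ρ (embF r k p j)).isLt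
    by_contra hcon
    exact hne (Fin.ext (by simp [Fin.val_last]; omega))
  set σ : Fin (r * k) → Fin k := fun j => ⟨(ρ (embF r k p j) : ℕ), hlt j⟩ with hσ
  have hσcast : ∀ j, (σ j).castSucc = ρ (embF r k p j) := by
    intro j
    apply Fin.ext
    simp [hσ]
  have hρeq : ρ = insF σ p := by
    funext i
    by_cases c1 : (i : ℕ) < p
    · rw [insF_lt σ hpk i c1]
      have he : embF r k p (⟨(i : ℕ), by omega⟩ : Fin (r * k)) = i := by
        apply Fin.ext
        rw [embF_val]
        simp [c1]
      rw [hσcast, he]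
    · by_cases c2 : (i : ℕ) < p + r
      · rw [insF_mid σ i (by omega) c2]
        exact (hblock i).2 ⟨by omega, c2⟩
      · rw [insF_ge σ hpk i (by omega)]
        have he : embF r k p (⟨(i : ℕ) - r, by omega⟩ : Fin (r * k)) = i := by
          apply Fin.ext
          rw [embF_val]
          have : ¬ ((i : ℕ) - r < p) := by omega
          rw [if_neg this]
          show (i : ℕ) - r + r = (i : ℕ)
          omega
        rw [hσcast, he]
  refine ⟨p, hpk, σ, ?_, hρeq⟩
  rw [mem_stirl_iff]
  constructor
  · intro b
    have : (Finset.univ.filter (fun j => σ j = b)).card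
        = (Finset.univ.filter (fun i => ρ i = b.castSucc)).card := by
      rw [hρeq]
      exact (card_filter_insF_castSucc σ hpk b).symm
    rw [this]
    exact hc b.castSucc
  · intro j1 j2 j3 h12 h23 h13
    have hemb12 : embF r k p j1 < embF r k p j2 := by
      rw [Fin.lt_def, embF_val, embF_val]
      have : (j1 : ℕ) < (j2 : ℕ) := h12
      split_ifs <;> omega
    have hemb23 : embF r k p j2 < embF r k p j3 := by
      rw [Fin.lt_def, embF_val, embF_val]
      have : (j2 : ℕ) < (j3 : ℕ) := h23
      split_ifs <;> omega
    have h13' : ρ (embF r k p j1) = ρ (embF r k p j3) := by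
      rw [← hσcast, ← hσcast, h13]
    have := hb _ _ _ hemb12 hemb23 h13'
    rw [← hσcast, ← hσcast] at this
    exact Fin.castSucc_le_castSucc_iff.1 this

end S11

namespace S11

lemma ascplatNum_eq (n : ℕ) (w : ℕ → ℕ) : ascplatNum n w = (apSet n w).card := rfl

def G (r : ℕ) : (k : ℕ) → Finset (Fin (r * k) → Fin k)
  | 0 => Finset.univ
  | (k + 1) => (G r k).biUnion (fun σ => (Finset.range (r * k + 1)).image (insF σ))

lemma stirl_eq_G {r : ℕ} (hr : 1 ≤ r) : ∀ k, stirlingSet r k = G r k := by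
  intro k
  induction k with
  | zero =>
    rw [G, stirlingSet]
    apply Finset.filter_true_of_mem
    intro ρ _
    exact ⟨fun a => a.elim0, fun i _ _ _ _ _ => absurd i.isLt (by omega)⟩
  | succ k ih =>
    ext ρ
    rw [G, Finset.mem_biUnion]
    constructor
    · intro h
      obtain ⟨p, hp, σ, hσ, rfl⟩ := exists_delete hr h
      exact ⟨σ, ih ▸ hσ, Finset.mem_image.2 ⟨p, Finset.mem_range.2 (by omega), rfl⟩⟩
    · rintro ⟨σ, hσ, himg⟩
      obtain ⟨p, hp, rfl⟩ := Finset.mem_image.1 himg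
      have hp' : p ≤ r * k := by have := Finset.mem_range.1 hp; omega
      exact insF_mem_stirl hr (ih ▸ hσ) hp'

lemma ofWord_lt {r k : ℕ} (σ : Fin (r * k) → Fin k) : ∀ i, ofWord σ i < k + 1 := by
  intro i
  unfold ofWord
  split
  · rename_i h
    have := (σ ⟨i, h⟩).isLt
    omega
  · omega

lemma ap_le_G {r : ℕ} (hr : 2 ≤ r) : ∀ k, ∀ σ ∈ G r k,
    (apSet (r * k) (ofWord σ)).card ≤ k - 1 := by
  intro k
  induction k with
  | zero =>
    intro σ _
    have h0 : apSet (r * 0) (ofWord σ) = ∅ := by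
      apply Finset.eq_empty_of_forall_notMem
      intro x hx
      rw [mem_apSet] at hx
      omega
    rw [h0]
    simp
  | succ k ih =>
    intro σ' hσ'
    rw [G, Finset.mem_biUnion] at hσ'
    obtain ⟨σ, hσ, himg⟩ := hσ'
    obtain ⟨p, hpmem, rfl⟩ := Finset.mem_image.1 himg
    have hp : p ≤ r * k := by have := Finset.mem_range.1 hpmem; omega
    have hm : r * (k + 1) = r * k + r := by ring
    rw [ofWord_insF σ hp, hm]
    have hle := ap_insW_le (ofWord σ) hr hp (ofWord_lt σ)
    have hIH := ih σ hσ
    rcases Nat.eq_zero_or_pos k with rfl | hk1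
    · have hp0 : p = 0 := by omega
      subst hp0
      rw [if_neg (by omega)] at hle
      omega
    · by_cases hp1 : 1 ≤ p
      · rw [if_pos hp1] at hle
        omega
      · rw [if_neg hp1] at hle
        omega

lemma count_step {r k : ℕ} (hr : 2 ≤ r) (hk : 1 ≤ k) (σ : Fin (r * k) → Fin k)
    (hap : (apSet (r * k) (ofWord σ)).card = k - 1) :
    ((Finset.range (r * k + 1)).filter
        (fun p => (apSet (r * (k + 1)) (ofWord (insF σ p))).card = k)).card
      = (r - 2) * k + 2 := by
  have hm : r * (k + 1) = r * k + r := by ring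
  have hcong : ∀ p ∈ Finset.range (r * k + 1),
      ((apSet (r * (k + 1)) (ofWord (insF σ p))).card = k ↔
        (apSet (r * k + r) (insW r p (k + 1) (ofWord σ))).card
          = (apSet (r * k) (ofWord σ)).card + 1) := by
    intro p hp
    rw [ofWord_insF σ (by have := Finset.mem_range.1 hp; omega), hm, hap]
    constructor <;> intro h <;> omega
  rw [Finset.filter_congr hcong]
  have hcg := count_good (ofWord σ) (n := r * k) hr (ofWord_lt σ)
  obtain ⟨s, rfl⟩ : ∃ s, r = s + 2 := ⟨r - 2, by omega⟩
  have h2 : (s + 2) * k = s * k + 2 * k := by ring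
  have h3 : (s + 2 - 2) * k = s * k := by rw [Nat.add_sub_cancel]
  omega

lemma count_zero {r k : ℕ} (hr : 2 ≤ r) (hk : 1 ≤ k) (σ : Fin (r * k) → Fin k)
    (hσ : σ ∈ G r k) (hap : (apSet (r * k) (ofWord σ)).card ≠ k - 1) :
    ((Finset.range (r * k + 1)).filter
        (fun p => (apSet (r * (k + 1)) (ofWord (insF σ p))).card = k)).card = 0 := by
  rw [Finset.card_eq_zero, Finset.filter_eq_empty_iff]
  intro p hp
  have hp' : p ≤ r * k := by have := Finset.mem_range.1 hp; omega
  have hm : r * (k + 1) = r * k + r := by ring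
  rw [ofWord_insF σ hp', hm]
  have hle := ap_insW_le (ofWord σ) hr hp' (ofWord_lt σ)
  have hb := ap_le_G hr k σ hσ
  have hite : (if 1 ≤ p then 1 else 0) ≤ 1 := by split <;> omega
  omega

lemma G_step {r k : ℕ} (hr : 2 ≤ r) (hk : 1 ≤ k) :
    ((G r (k + 1)).filter (fun σ => (apSet (r * (k + 1)) (ofWord σ)).card = k)).card
      = ((r - 2) * k + 2)
        * ((G r k).filter (fun σ => (apSet (r * k) (ofWord σ)).card = k - 1)).card := by
  rw [G, Finset.filter_biUnion]
  rw [Finset.card_biUnion]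
  · have hterm : ∀ σ ∈ G r k,
        (((Finset.range (r * k + 1)).image (insF σ)).filter
          (fun τ => (apSet (r * (k + 1)) (ofWord τ)).card = k)).card
        = (if (apSet (r * k) (ofWord σ)).card = k - 1 then (r - 2) * k + 2 else 0) := by
      intro σ hσ
      rw [Finset.filter_image, Finset.card_image_of_injOn]
      · split_ifs with hap
        · exact count_step hr hk σ hap
        · exact count_zero hr hk σ hσ hap
      · intro p1 hp1 p2 hp2 heq
        have h1 : p1 ≤ r * k := by
          have := Finset.mem_range.1 (Finset.mem_filter.1 hp1).1; omega
        have h2 : p2 ≤ r * k := by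
          have := Finset.mem_range.1 (Finset.mem_filter.1 hp2).1; omega
        exact (insF_inj (by omega) h1 h2 heq).1
    rw [Finset.sum_congr rfl hterm, Finset.sum_ite, Finset.sum_const_zero,
      Finset.sum_const, add_zero, smul_eq_mul, mul_comm]
  · intro σ1 h1 σ2 h2 hne
    apply Finset.disjoint_filter_filter
    rw [Finset.disjoint_left]
    intro τ ht1 ht2
    obtain ⟨p1, hp1, rfl⟩ := Finset.mem_image.1 ht1
    obtain ⟨p2, hp2, heq⟩ := Finset.mem_image.1 ht2
    have hr1 : p1 ≤ r * k := by have := Finset.mem_range.1 hp1; omega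
    have hr2 : p2 ≤ r * k := by have := Finset.mem_range.1 hp2; omega
    exact hne ((insF_inj (by omega) hr2 hr1 heq).2.symm)

lemma G_base {r : ℕ} (hr : 2 ≤ r) :
    ((G r 1).filter (fun σ => (apSet (r * 1) (ofWord σ)).card = 0)).card = 1 := by
  have hall : ∀ σ : Fin (r * 1) → Fin 1, apSet (r * 1) (ofWord σ) = ∅ := by
    intro σ
    apply Finset.eq_empty_of_forall_notMem
    intro x hx
    rw [mem_apSet] at hx
    have hv : ∀ i, i < r * 1 → ofWord σ i = 1 := by
      intro i hi
      unfold ofWord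
      rw [dif_pos hi, Fin.val_eq_zero]
    obtain ⟨⟨hx1, hx2⟩, hx3, _⟩ := hx
    rw [hv (x - 1) (by omega), hv x (by omega)] at hx3
    omega
  have hfe : ((G r 1).filter (fun σ => (apSet (r * 1) (ofWord σ)).card = 0)) = G r 1 := by
    apply Finset.filter_true_of_mem
    intro σ _
    rw [hall σ, Finset.card_empty]
  rw [hfe]
  have hsub : ∀ (σ1 σ2 : Fin (r * 0) → Fin 0), σ1 = σ2 := by
    intro σ1 σ2
    funext i
    exact absurd i.isLt (by omega)
  rw [G, Finset.card_biUnion]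
  · have hone : ∀ σ ∈ (G r 0), ((Finset.range (r * 0 + 1)).image (insF σ)).card = 1 := by
      intro σ _
      have h0 : r * 0 + 1 = 1 := by omega
      rw [h0, Finset.range_one, Finset.image_singleton, Finset.card_singleton]
    rw [Finset.sum_congr rfl hone, Finset.sum_const, smul_eq_mul, mul_one]
    rw [G]
    rw [Finset.card_univ]
    refine Fintype.card_eq_one_iff.2 ⟨(fun i => absurd i.isLt (by omega)), ?_⟩
    intro y
    exact hsub y _
  · intro σ1 _ σ2 _ hne
    exact absurd (hsub σ1 σ2) hne

lemma G_count {r : ℕ} (hr : 2 ≤ r) : ∀ k, 1 ≤ k →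
    ((G r k).filter (fun σ => (apSet (r * k) (ofWord σ)).card = k - 1)).card
      = Finset.prod (Finset.Icc 1 (k - 1)) (fun j => (r - 2) * j + 2) := by
  intro k hk
  induction k, hk using Nat.le_induction with
  | base =>
    rw [show (1 : ℕ) - 1 = 0 from rfl, Finset.Icc_eq_empty (by omega), Finset.prod_empty]
    exact G_base hr
  | succ n hn ih =>
    obtain ⟨m, rfl⟩ : ∃ m, n = m + 1 := ⟨n - 1, by omega⟩
    rw [show m + 1 + 1 - 1 = m + 1 from rfl]
    rw [Finset.prod_Icc_succ_top (by omega : 1 ≤ m + 1)]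
    rw [G_step hr (by omega), ih, mul_comm, show m + 1 - 1 = m from rfl]
  
end S11

/-- the number of `r`-Stirling permutations of order `k` with exactly `k-1`
ascent-plateaus equals `∏_{j=1}^{k-1} ((r-2)j + 2)`. -/
theorem stmt11 (r k : ℕ) (hr : 2 ≤ r) (hk : 1 ≤ k) :
    ((stirlingSet r k).filter (fun ρ => ascplatNum (r * k) (ofWord ρ) = k - 1)).card =
      Finset.prod (Finset.Icc 1 (k - 1)) (fun j => (r - 2) * j + 2) := by
  rw [S11.stirl_eq_G (by omega : 1 ≤ r) k]
  exact S11.G_count hr k hk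
end
end

section
/- Let r ≥ 2 and define polynomials C^{pk}_{r,k}(t) for k ≥ 1 by C^{pk}_{r,1}(t) = 1 and C^{pk}_{r,k+1}(t) = (1 + rkt)·C^{pk}_{r,k}(t) + 2t(1-t)·(d/dt)C^{pk}_{r,k}(t). Then for every k ≥ 1, the polynomial C^{pk}_{r,k}(t) has only real roots. -/
open Polynomial Finset

/-- Invariant: p = a * ∏ (X - xᵢ) with a > 0 and x strictly increasing negatives. -/
def MyInv (p : Polynomial ℝ) (n : ℕ) : Prop :=
  ∃ a : ℝ, 0 < a ∧ ∃ x : Fin n → ℝ, StrictMono x ∧ (∀ i, x i < 0) ∧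
    p = C a * ∏ i, (X - C (x i))

lemma neg_prod_sign {ι : Type*} {s : Finset ι} {f : ι → ℝ} (h : ∀ j ∈ s, f j < 0) :
    0 < (-1 : ℝ) ^ s.card * ∏ j ∈ s, f j := by
  induction s using Finset.cons_induction with
  | empty => simp
  | cons i s hi ih =>
    rw [Finset.prod_cons, Finset.card_cons, pow_succ]
    have h1 := ih fun j hj => h j (Finset.mem_cons_of_mem hj)
    have h2 : f i < 0 := h i (Finset.mem_cons_self i s)
    nlinarith

lemma exists_root_between (p : Polynomial ℝ) {u v : ℝ} (huv : u < v)
    (h : p.eval u * p.eval v < 0) : ∃ c, u < c ∧ c < v ∧ p.eval c = 0 := by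
  rcases lt_or_ge (p.eval u) 0 with hu | hu
  · have hv : 0 < p.eval v := by nlinarith
    obtain ⟨c, hc, hc0⟩ := intermediate_value_Ioo huv.le p.continuousOn ⟨hu, hv⟩
    exact ⟨c, hc.1, hc.2, hc0⟩
  · have hu0 : p.eval u ≠ 0 := fun h' => by rw [h', zero_mul] at h; exact lt_irrefl 0 h
    have hu' : 0 < p.eval u := hu.lt_of_ne (Ne.symm hu0)
    have hv : p.eval v < 0 := by nlinarith
    obtain ⟨c, hc, hc0⟩ := intermediate_value_Ioo' huv.le p.continuousOn ⟨hv, hu'⟩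
    exact ⟨c, hc.1, hc.2, hc0⟩

lemma exists_sign_at_bot (P : Polynomial ℝ) (h : 0 < P.leadingCoeff) (hd : 0 < P.natDegree)
    (b : ℝ) : ∃ t < b, 0 < (-1 : ℝ) ^ P.natDegree * P.eval t := by
  set m := P.natDegree with hm
  have hcomp : (-X : Polynomial ℝ).natDegree = 1 := by simp
  have hlcneg : (-X : Polynomial ℝ).leadingCoeff = -1 := by simp
  have hcomp0 : P.comp (-X) ≠ 0 := by
    intro h0
    have h2 := leadingCoeff_comp (p := P) (q := -X) (by rw [hcomp]; norm_num)
    rw [h0, leadingCoeff_zero, hlcneg] at h2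
    exact (mul_ne_zero (ne_of_gt h) (pow_ne_zero _ (by norm_num : (-1:ℝ) ≠ 0))) h2.symm
  set Q : Polynomial ℝ := C ((-1 : ℝ) ^ m) * P.comp (-X) with hQ
  have hC0 : (C ((-1:ℝ) ^ m)) ≠ 0 := by
    simp only [ne_eq, C_eq_zero]
    exact pow_ne_zero _ (by norm_num)
  have hlcQ : Q.leadingCoeff = P.leadingCoeff := by
    rw [hQ, leadingCoeff_mul, leadingCoeff_C, leadingCoeff_comp (by rw [hcomp]; norm_num),
      hlcneg, mul_comm ((-1:ℝ)^m), mul_assoc, ← pow_add,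
      Even.neg_one_pow (⟨m, rfl⟩ : Even (P.natDegree + m)), mul_one]
  have hdQ : Q.natDegree = m := by
    rw [hQ, natDegree_mul hC0 hcomp0, natDegree_C, natDegree_comp, hcomp, mul_one, zero_add]
  have hdegQ : 0 < Q.degree := by
    rw [← natDegree_pos_iff_degree_pos, hdQ]; exact hd
  have htend := Polynomial.tendsto_atTop_of_leadingCoeff_nonneg Q hdegQ (le_of_lt (hlcQ ▸ h))
  have hev := (htend.eventually_gt_atTop 0).and (Filter.eventually_gt_atTop (-b))
  obtain ⟨t, ht0, htb⟩ := hev.exists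
  refine ⟨-t, by linarith, ?_⟩
  have hQt : Q.eval t = (-1:ℝ) ^ m * P.eval (-t) := by
    rw [hQ]; simp [eval_comp]
  rw [← hQt]; exact ht0

lemma sign_flip {s A B : ℝ} (hs : s^2 = 1) (h1 : 0 < s * -1 * A) (h2 : 0 < s * B) :
    A * B < 0 := by nlinarith

lemma step (p : Polynomial ℝ) (n : ℕ) (c : ℝ) (hc : 2 * (n:ℝ) < c) (h : MyInv p n) :
    MyInv ((1 + C c * X) * p + 2 * X * (1 - X) * derivative p) (n + 1) := by
  obtain ⟨a, ha, x, hmono, hneg, hp⟩ := h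
  set q : Polynomial ℝ := (1 + C c * X) * p + 2 * X * (1 - X) * derivative p with hq
  rcases Nat.eq_zero_or_pos n with hn0 | hn1
  · subst hn0
    have hc0 : (0:ℝ) < c := by simpa using hc
    have hpa : p = C a := by rw [hp]; simp
    have hca : c * a * (1/c) = a := by field_simp
    have hkey : C (c*a) * (X - C (-(1/c))) = C a + C c * X * C a := by
      have e1 : C (c*a) = C c * C a := C_mul
      have e2 : C (c*a) * C (1/c) = C a := by rw [← C_mul, hca]
      rw [C_neg, sub_neg_eq_add, mul_add, e2, e1]
      ring
    refine ⟨c * a, mul_pos hc0 ha, ![-(1/c)], ?_, ?_, ?_⟩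
    · intro i j hij
      have hi := i.isLt
      have hj := j.isLt
      rw [Fin.lt_def] at hij
      omega
    · intro i
      have hi := i.isLt
      have : i = 0 := Fin.ext (by omega)
      rw [this]
      simp
      positivity
    · rw [Fin.prod_univ_one, hq, hpa, derivative_C]
      simp only [Matrix.cons_val_zero]
      rw [hkey]
      ring
  · -- main case n ≥ 1
    have hmonicP : (∏ i, (X - C (x i)) : Polynomial ℝ).Monic :=
      monic_prod_of_monic _ _ fun i _ => monic_X_sub_C _
    have hdegP : (∏ i : Fin n, (X - C (x i))).natDegree = n := by
      rw [natDegree_prod_of_monic _ _ fun i _ => monic_X_sub_C _]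
      simp
    have hpdeg : p.natDegree = n := by
      rw [hp, natDegree_C_mul (ne_of_gt ha), hdegP]
    have hplc : p.leadingCoeff = a := by
      rw [hp, leadingCoeff_mul, leadingCoeff_C, hmonicP.leadingCoeff, mul_one]
    -- eval formulas
    have hevq : ∀ t : ℝ, q.eval t
        = (1 + c*t) * p.eval t + 2*t*(1-t) * (derivative p).eval t := by
      intro t
      rw [hq]
      simp only [eval_add, eval_mul, eval_one, eval_sub, eval_X, eval_C, eval_ofNat]
    have hevp : ∀ i, p.eval (x i) = 0 := by
      intro i
      rw [hp, eval_mul, eval_prod]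
      rw [Finset.prod_eq_zero (Finset.mem_univ i) (by simp), mul_zero]
    have hevd : ∀ i, (derivative p).eval (x i)
        = a * ∏ j ∈ univ.erase i, (x i - x j) := by
      intro i
      have hsplit : (∏ j : Fin n, (X - C (x j)))
          = (X - C (x i)) * ∏ j ∈ univ.erase i, (X - C (x j)) :=
        (Finset.mul_prod_erase univ _ (mem_univ i)).symm
      rw [hp, derivative_C_mul, hsplit, derivative_mul, derivative_X_sub_C, one_mul]
      simp [eval_prod]
    -- sign of the erased product
    have hEi : ∀ i : Fin n, 0 < (-1:ℝ)^(n - 1 - (i:ℕ)) * ∏ j ∈ univ.erase i, (x i - x j) := by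
      intro i
      rw [← Finset.prod_filter_mul_prod_filter_not (univ.erase i) (fun k => k < i)]
      have h1 : (univ.erase i).filter (fun k => k < i) = Finset.Iio i := by
        ext k
        simp only [Finset.mem_filter, Finset.mem_erase, Finset.mem_univ, Finset.mem_Iio,
          true_and, and_true]
        constructor
        · rintro ⟨-, hlt⟩; exact hlt
        · intro hlt; exact ⟨ne_of_lt hlt, hlt⟩
      have h2 : (univ.erase i).filter (fun k => ¬ k < i) = Finset.Ioi i := by
        ext k
        simp only [Finset.mem_filter, Finset.mem_erase, Finset.mem_univ, Finset.mem_Ioi,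
          true_and, and_true]
        constructor
        · rintro ⟨hne, hnlt⟩
          exact lt_of_le_of_ne (not_lt.mp hnlt) (Ne.symm hne)
        · intro hlt; exact ⟨ne_of_gt hlt, not_lt.mpr hlt.le⟩
      rw [h1, h2]
      have hA : 0 < ∏ k ∈ Finset.Iio i, (x i - x k) :=
        Finset.prod_pos fun k hk => sub_pos.mpr (hmono (Finset.mem_Iio.mp hk))
      have hB := neg_prod_sign (s := Finset.Ioi i) (f := fun k => x i - x k)
        (fun k hk => sub_neg.mpr (hmono (Finset.mem_Ioi.mp hk)))
      rw [Fin.card_Ioi] at hB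
      have hre : (-1:ℝ)^(n - 1 - (i:ℕ)) *
          ((∏ k ∈ Finset.Iio i, (x i - x k)) * ∏ k ∈ Finset.Ioi i, (x i - x k))
          = (∏ k ∈ Finset.Iio i, (x i - x k)) *
            ((-1:ℝ)^(n - 1 - (i:ℕ)) * ∏ k ∈ Finset.Ioi i, (x i - x k)) := by ring
      rw [hre]
      exact mul_pos hA hB
    -- sign of q at the roots of p
    have hqxi : ∀ i : Fin n, 0 < (-1:ℝ)^(n - (i:ℕ)) * q.eval (x i) := by
      intro i
      have hii : n - (i:ℕ) = (n - 1 - (i:ℕ)) + 1 := by have := i.isLt; omega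
      have hre : (-1:ℝ)^((n - 1 - (i:ℕ)) + 1) * q.eval (x i)
          = (-(2 * x i * (1 - x i) * a)) *
            ((-1:ℝ)^(n - 1 - (i:ℕ)) * ∏ j ∈ univ.erase i, (x i - x j)) := by
        rw [hevq, hevp i, hevd i, pow_succ]
        ring
      rw [hii, hre]
      refine mul_pos ?_ (hEi i)
      have hx := hneg i
      have hpos : 0 < (-(x i)) * (1 - x i) := mul_pos (by linarith) (by linarith)
      nlinarith [mul_pos hpos ha]
    -- sign of q at 0
    have hqat0 : 0 < q.eval 0 := by
      have h0 : q.eval 0 = p.eval 0 := by rw [hevq]; ring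
      rw [h0, hp]
      simp only [eval_mul, eval_C, eval_prod, eval_sub, eval_X, zero_sub]
      exact mul_pos ha (Finset.prod_pos fun j _ => neg_pos.mpr (hneg j))
    -- coefficient of degree n+1
    have hC2 : (Polynomial.C (2:ℝ)) = (2 : Polynomial ℝ) := map_ofNat C 2
    have e1 : q = p + C c * (X * p) + C 2 * (X * derivative p)
        - C 2 * (X^2 * derivative p) := by
      rw [hq, hC2]; ring
    have hpn1 : p.coeff (n+1) = 0 :=
      coeff_eq_zero_of_natDegree_lt (by rw [hpdeg]; omega)
    have hpn : p.coeff n = a := by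
      conv_lhs => rw [← hpdeg]
      rw [coeff_natDegree, hplc]
    have hd1 : (derivative p).coeff n = 0 := by
      rw [coeff_derivative, hpn1, zero_mul]
    have hcast : ((n - 1 : ℕ) : ℝ) = (n:ℝ) - 1 := by
      rw [Nat.cast_sub hn1]; norm_num
    have hd2 : (derivative p).coeff (n-1) = a * n := by
      rw [coeff_derivative]
      have hix : n - 1 + 1 = n := by omega
      rw [hix, hpn, hcast]
      ring
    have hx2 : (X^2 * derivative p).coeff (n+1) = a * n := by
      have hix : n + 1 = (n - 1) + 2 := by omega
      rw [hix, coeff_X_pow_mul, hd2]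
    have hx1 : (X * derivative p).coeff (n+1) = 0 := by rw [coeff_X_mul, hd1]
    have hcoeff : q.coeff (n+1) = (c - 2*n) * a := by
      rw [e1, coeff_sub, coeff_add, coeff_add, coeff_C_mul, coeff_C_mul, coeff_C_mul,
        coeff_X_mul, hpn1, hpn, hx1, hx2]
      ring
    -- degree of q
    have hqdegle : q.natDegree ≤ n + 1 := by
      rw [hq]
      refine le_trans (natDegree_add_le _ _) (max_le ?_ ?_)
      · refine le_trans natDegree_mul_le ?_
        have h1 : (1 + C c * X : Polynomial ℝ).natDegree ≤ 1 := by compute_degree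
        omega
      · refine le_trans natDegree_mul_le ?_
        have h2 : (2 * X * (1 - X) : Polynomial ℝ).natDegree ≤ 2 := by compute_degree
        have h3 : (derivative p).natDegree ≤ n - 1 :=
          le_trans (natDegree_derivative_le p) (by omega)
        omega
    have hqc0 : q.coeff (n+1) ≠ 0 := by
      rw [hcoeff]
      exact ne_of_gt (mul_pos (by linarith) ha)
    have hqdeg : q.natDegree = n + 1 := le_antisymm hqdegle (le_natDegree_of_ne_zero hqc0)
    have hqlc : q.leadingCoeff = (c - 2*n) * a := by
      rw [Polynomial.leadingCoeff, hqdeg, hcoeff]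
    have hqlcpos : 0 < q.leadingCoeff := by rw [hqlc]; exact mul_pos (by linarith) ha
    have hqne0 : q ≠ 0 := fun h0 => by
      rw [h0, leadingCoeff_zero] at hqlcpos; exact lt_irrefl 0 hqlcpos
    -- a very negative point with the right sign
    obtain ⟨t0, ht0b, ht0sign⟩ :=
      exists_sign_at_bot q hqlcpos (by rw [hqdeg]; omega) (x ⟨0, hn1⟩)
    rw [hqdeg] at ht0sign
    -- the chain of points
    set g : Fin (n+1) → ℝ := Fin.snoc x (0:ℝ) with hg
    set u : Fin (n+2) → ℝ := Fin.cons t0 g with hu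
    have hu0 : u 0 = t0 := rfl
    have husucc : ∀ i : Fin (n+1), u i.succ = g i := fun i => by
      simp [hu]
    have hsign : ∀ j : Fin (n + 2), 0 < (-1:ℝ)^(n + 1 - (j:ℕ)) * q.eval (u j) := by
      intro j
      refine Fin.cases ?_ ?_ j
      · simpa [hu0] using ht0sign
      · intro i
        refine Fin.lastCases ?_ ?_ i
        · rw [husucc, hg, Fin.snoc_last]
          have : n + 1 - ((Fin.last n).succ : ℕ) = 0 := by simp
          rw [this, pow_zero, one_mul]
          exact hqat0
        · intro i'
          rw [husucc, hg, Fin.snoc_castSucc]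
          have : n + 1 - ((i'.castSucc).succ : ℕ) = n - (i':ℕ) := by
            simp [Fin.val_succ]
          rw [this]
          exact hqxi i'
    -- u is increasing where needed
    have hustep : ∀ j : Fin (n+1), u j.castSucc < u j.succ := by
      intro j
      refine Fin.cases ?_ ?_ j
      · rw [Fin.castSucc_zero, hu0, husucc]
        have h0n : (0 : Fin (n+1)) = Fin.castSucc ⟨0, hn1⟩ := rfl
        rw [h0n, hg, Fin.snoc_castSucc]
        exact ht0b
      · intro i
        rw [← Fin.succ_castSucc, husucc, husucc, hg, Fin.snoc_castSucc]
        by_cases hin : ((i:ℕ)+1) < n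
        · have : i.succ = Fin.castSucc ⟨(i:ℕ)+1, hin⟩ := by
            apply Fin.ext; simp
          rw [this, Fin.snoc_castSucc]
          exact hmono (by simp [Fin.lt_def])
        · have : i.succ = Fin.last n := by
            apply Fin.ext; simp; omega
          rw [this, Fin.snoc_last]
          exact hneg i
    -- roots of q in each gap
    have hroot : ∀ j : Fin (n+1), ∃ y, u j.castSucc < y ∧ y < u j.succ ∧ q.eval y = 0 := by
      intro j
      refine exists_root_between q (hustep j) ?_
      have h1 := hsign j.castSucc
      have h2 := hsign j.succ
      rw [Fin.coe_castSucc] at h1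
      rw [Fin.val_succ] at h2
      have hj := j.isLt
      have he1 : n + 1 - (j:ℕ) = (n - (j:ℕ)) + 1 := by omega
      have he2 : n + 1 - ((j:ℕ)+1) = n - (j:ℕ) := by omega
      rw [he1, pow_succ] at h1
      rw [he2] at h2
      exact sign_flip (by rw [← pow_mul]; exact Even.neg_one_pow ⟨n - (j:ℕ), by ring⟩) h1 h2
    choose y hy1 hy2 hy0 using hroot
    have hymono : StrictMono y := by
      rw [Fin.strictMono_iff_lt_succ]
      intro i
      have h1 : y i.castSucc < u i.castSucc.succ := hy2 i.castSucc
      have h2 : u i.succ.castSucc < y i.succ := hy1 i.succ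
      rw [Fin.succ_castSucc] at h1
      exact lt_trans h1 h2
    have hyneg : ∀ j, y j < 0 := by
      intro j
      have hle : y j ≤ y (Fin.last n) := hymono.monotone (Fin.le_last j)
      have hlast : y (Fin.last n) < u (Fin.last n).succ := hy2 _
      have hulast : u (Fin.last n).succ = 0 := by
        rw [husucc, hg, Fin.snoc_last]
      rw [hulast] at hlast
      linarith
    have hyinj : Function.Injective y := hymono.injective
    set T : Finset ℝ := Finset.image y univ with hT
    have hTcard : T.card = n + 1 := by
      rw [hT, Finset.card_image_of_injective _ hyinj, Finset.card_univ, Fintype.card_fin]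
    have hTsub : T.val ≤ q.roots := by
      rw [Multiset.le_iff_subset T.nodup]
      intro z hz
      rw [Finset.mem_val, hT, Finset.mem_image] at hz
      obtain ⟨j, -, rfl⟩ := hz
      rw [Polynomial.mem_roots hqne0]
      exact hy0 j
    set D : Polynomial ℝ := (T.val.map fun z => X - C z).prod with hD
    have hdvd : D ∣ q :=
      (Multiset.prod_dvd_prod_of_le (Multiset.map_le_map hTsub)).trans
        (prod_multiset_X_sub_C_dvd q)
    obtain ⟨e, he⟩ := hdvd
    have hDmonic : D.Monic :=
      monic_multiset_prod_of_monic _ _ fun z _ => monic_X_sub_C z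
    have hDdeg : D.natDegree = n + 1 := by
      rw [hD, natDegree_multiset_prod_of_monic _ (by
        intro f hf
        obtain ⟨z, -, rfl⟩ := Multiset.mem_map.mp hf
        exact monic_X_sub_C z)]
      rw [Multiset.map_map]
      have hcomp1 : (Polynomial.natDegree ∘ fun z : ℝ => X - C z) = fun _ => 1 := by
        funext z; simp
      rw [hcomp1, Multiset.map_const', Multiset.sum_replicate, smul_eq_mul, mul_one]
      exact hTcard
    have he0 : e ≠ 0 := by
      intro h0
      rw [h0, mul_zero] at he
      exact hqne0 he
    have hedeg : e.natDegree = 0 := by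
      have hD0 : D ≠ 0 := hDmonic.ne_zero
      have := natDegree_mul hD0 he0
      rw [← he, hqdeg, hDdeg] at this
      omega
    obtain ⟨ec, hec⟩ := natDegree_eq_zero.mp hedeg
    have heclc : ec = q.leadingCoeff := by
      rw [he, ← hec, leadingCoeff_mul, hDmonic.leadingCoeff, one_mul, leadingCoeff_C]
    have hprodeq : D = ∏ i, (X - C (y i)) := by
      have hDF : D = T.prod (fun z => X - C z) := rfl
      rw [hDF, hT, Finset.prod_image (fun i _ j _ h => hyinj h)]
    refine ⟨(c - 2*n) * a, mul_pos (by linarith) ha, y, hymono, hyneg, ?_⟩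
    rw [← hqlc, ← heclc, ← hprodeq, he, ← hec]
    ring

open Polynomial in
/-- the polynomials `C^{pk}_{r,k}` defined by `C^{pk}_{r,1} = 1` and
`C^{pk}_{r,k+1} = (1 + rkt) C^{pk}_{r,k} + 2t(1-t) (C^{pk}_{r,k})'` have only real roots. -/
theorem stmt14 (r : ℕ) (hr : 2 ≤ r) (C : ℕ → Polynomial ℝ) (h1 : C 1 = 1)
    (hrec : ∀ k, 1 ≤ k →
      C (k + 1) = (1 + ((r * k : ℕ) : Polynomial ℝ) * X) * C k
        + 2 * X * (1 - X) * derivative (C k)) :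
    ∀ k, 1 ≤ k → ∀ z : ℂ, ((C k).map (algebraMap ℝ ℂ)).IsRoot z → z.im = 0 := by
  have key : ∀ k, 1 ≤ k → MyInv (C k) (k - 1) := by
    intro k hk
    induction k with
    | zero => omega
    | succ m ih =>
      rcases Nat.eq_zero_or_pos m with rfl | hm
      · refine ⟨1, one_pos, Fin.elim0, fun i => i.elim0, fun i => i.elim0, ?_⟩
        rw [h1]
        simp
      · have hinv := ih hm
        have hrec' := hrec m hm
        have hCnat : ((r * m : ℕ) : Polynomial ℝ)
            = Polynomial.C (((r * m : ℕ) : ℝ)) := by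
          rw [Polynomial.C_eq_natCast]
        rw [hCnat] at hrec'
        have hc : 2 * ((m - 1 : ℕ) : ℝ) < ((r * m : ℕ) : ℝ) := by
          have h2r : (2:ℝ) ≤ r := by exact_mod_cast hr
          have h1m : (1:ℝ) ≤ m := by exact_mod_cast hm
          have hmm : ((m - 1 : ℕ) : ℝ) = (m:ℝ) - 1 := by
            rw [Nat.cast_sub hm]; norm_num
          rw [hmm]
          push_cast
          nlinarith
        have := step (C m) (m-1) (((r * m : ℕ) : ℝ)) hc hinv
        rw [← hrec'] at this
        have hm1 : m - 1 + 1 = m := by omega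
        have hm2 : m + 1 - 1 = m := by omega
        rw [hm1] at this
        rw [hm2]
        exact this
  intro k hk z hz
  obtain ⟨a, ha, x, -, -, hCk⟩ := key k hk
  rw [hCk] at hz
  rw [IsRoot.def] at hz
  simp only [Polynomial.map_mul, Polynomial.map_prod, Polynomial.map_sub, Polynomial.map_X,
    Polynomial.map_C, eval_mul, eval_C, eval_prod, eval_sub, eval_X] at hz
  have ha' : (algebraMap ℝ ℂ) a ≠ 0 := by
    simp only [ne_eq, _root_.map_eq_zero]
    exact ne_of_gt ha
  rcases mul_eq_zero.mp hz with h | h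
  · exact absurd h ha'
  · obtain ⟨i, -, hi⟩ := Finset.prod_eq_zero_iff.mp h
    have hz' : z = (algebraMap ℝ ℂ) (x i) := by
      have := sub_eq_zero.mp hi
      exact this
    rw [hz']
    simp [Complex.ofReal_im]
end

section
/- Let r ≥ 2 and define polynomials C^{des}_{r,k}(t) for k ≥ 1 by C^{des}_{r,1}(t) = t and C^{des}_{r,k+1}(t) = (1 + rk)·t·C^{des}_{r,k}(t) + t(1-t)·(d/dt)C^{des}_{r,k}(t). Then for every k ≥ 1, the polynomial C^{des}_{r,k}(t) has only real roots. -/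
open Polynomial in
private lemma stmt15_ivt_root (p : Polynomial ℝ) {a b : ℝ} (hab : a < b)
    (h : p.eval a * p.eval b < 0) :
    ∃ z, z ∈ Set.Ioo a b ∧ p.eval z = 0 := by
  rcases mul_neg_iff.mp h with ⟨ha, hb⟩ | ⟨ha, hb⟩
  · obtain ⟨z, hz, hz0⟩ := intermediate_value_Ioo' hab.le p.continuous.continuousOn
      (by constructor <;> assumption : (0:ℝ) ∈ Set.Ioo (p.eval b) (p.eval a))
    exact ⟨z, hz, hz0⟩
  · obtain ⟨z, hz, hz0⟩ := intermediate_value_Ioo hab.le p.continuous.continuousOn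
      (by constructor <;> assumption : (0:ℝ) ∈ Set.Ioo (p.eval a) (p.eval b))
    exact ⟨z, hz, hz0⟩

private lemma stmt15_prod_sign {k : ℕ} (x : Fin k → ℝ) (hx : StrictAnti x) (i : Fin k) :
    0 < (-1:ℝ)^(i:ℕ) * ∏ j ∈ Finset.univ.erase i, (x i - x j) := by
  have hsplit : Finset.univ.erase i = Finset.Iio i ∪ Finset.Ioi i := by
    ext j
    simp [Finset.mem_erase, lt_or_lt_iff_ne, ne_comm]
  have hdisj : Disjoint (Finset.Iio i) (Finset.Ioi i) := by
    simp [Finset.disjoint_left]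
    intro a ha; exact le_of_lt ha
  have hcard : (Finset.Iio i).card = (i : ℕ) := by simp
  have h1 : ∏ j ∈ Finset.Iio i, (x i - x j)
      = (-1:ℝ)^(i:ℕ) * ∏ j ∈ Finset.Iio i, (x j - x i) := by
    rw [← hcard, ← Finset.prod_const (-1:ℝ), ← Finset.prod_mul_distrib]
    exact Finset.prod_congr rfl fun j _ => by ring
  have h2 : 0 < ∏ j ∈ Finset.Iio i, (x j - x i) :=
    Finset.prod_pos fun j hj => sub_pos.mpr (hx (Finset.mem_Iio.mp hj))
  have h3 : 0 < ∏ j ∈ Finset.Ioi i, (x i - x j) :=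
    Finset.prod_pos fun j hj => sub_pos.mpr (hx (Finset.mem_Ioi.mp hj))
  have h4 : (-1:ℝ)^(i:ℕ) * (-1:ℝ)^(i:ℕ) = 1 := by
    rw [← pow_add, ← two_mul, pow_mul]; norm_num
  rw [hsplit, Finset.prod_union hdisj, h1]
  nlinarith [mul_pos h2 h3]

open Polynomial in
private lemma stmt15_eval_derivative_prod {k : ℕ} (x : Fin k → ℝ)
    (hinj : Function.Injective x) (i : Fin k) :
    (derivative (∏ j, (X - Polynomial.C (x j)))).eval (x i)
      = ∏ j ∈ Finset.univ.erase i, (x i - x j) := by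
  classical
  have h1 : (∏ j, (X - Polynomial.C (x j)))
      = (Multiset.map (fun a => X - Polynomial.C a) (Finset.univ.val.map x)).prod := by
    rw [Multiset.map_map]; rfl
  have hr : x i ∈ Finset.univ.val.map x := Multiset.mem_map_of_mem _ (Finset.mem_univ_val i)
  rw [h1, eval_multiset_prod_X_sub_C_derivative hr]
  rw [← Multiset.map_erase _ hinj, Multiset.map_map]
  rw [← Finset.erase_val]
  rfl

open Polynomial in
private lemma stmt15_far_left {k : ℕ} {Q : Polynomial ℝ} {c' M : ℝ} (hc' : 0 < c')
    (hQdeg : Q.natDegree = k + 1) (hlead : Q.leadingCoeff = c') :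
    ∃ a : ℝ, a < M ∧ 0 < (-1:ℝ)^(k+1) * Q.eval a := by
  set S : Polynomial ℝ := Q.comp (-X) with hS
  have hnegX : (-X : Polynomial ℝ).natDegree = 1 := by simp
  have hSlead : S.leadingCoeff = c' * (-1:ℝ)^(k+1) := by
    rw [hS, leadingCoeff_comp (by rw [hnegX]; norm_num)]
    rw [hlead, hQdeg]
    simp
  set T : Polynomial ℝ := C ((-1:ℝ)^(k+1)) * S with hT
  have hsq : ((-1:ℝ)^(k+1)) * ((-1:ℝ)^(k+1)) = 1 := by
    rw [← pow_add, ← two_mul, pow_mul]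
    norm_num
  have hne : ((-1:ℝ)^(k+1)) ≠ 0 := pow_ne_zero _ (by norm_num)
  have hTlead : T.leadingCoeff = c' := by
    rw [hT, leadingCoeff_mul, leadingCoeff_C, hSlead]
    calc (-1:ℝ)^(k+1) * (c' * (-1)^(k+1))
        = ((-1:ℝ)^(k+1) * (-1)^(k+1)) * c' := by ring
      _ = c' := by rw [hsq]; ring
  have hTdeg : T.natDegree = k + 1 := by
    rw [hT, natDegree_C_mul hne, hS, natDegree_comp, hnegX, hQdeg, mul_one]
  have hTdegpos : 0 < T.degree := natDegree_pos_iff_degree_pos.mp (by omega)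
  have htend := Polynomial.tendsto_atTop_of_leadingCoeff_nonneg T hTdegpos (hTlead ▸ hc'.le)
  obtain ⟨t, htpos, htgt⟩ :=
    ((htend.eventually_gt_atTop 0).and (Filter.eventually_gt_atTop (-M))).exists
  refine ⟨-t, by linarith, ?_⟩
  have hTeval : T.eval t = (-1:ℝ)^(k+1) * Q.eval (-t) := by
    rw [hT, eval_mul, eval_C, hS, eval_comp]
    simp
  rw [← hTeval]
  exact htpos

open Polynomial in
private lemma stmt15_assemble {k : ℕ} (hk : 1 ≤ k) {Q : Polynomial ℝ} {c' : ℝ} (hc' : 0 < c')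
    {x : Fin k → ℝ} (hx : StrictAnti x) (hx0 : x ⟨0, hk⟩ = 0)
    (hxneg : ∀ i : Fin k, 0 < (i:ℕ) → x i < 0)
    (hQdeg : Q.natDegree = k+1) (hlead : Q.leadingCoeff = c') (hQne : Q ≠ 0)
    (hQ0 : Q.eval 0 = 0)
    {y0 : ℝ} (hy0neg : y0 < 0) (hQy0 : Q.eval y0 < 0) (hy0gt : ∀ h : 1 < k, x ⟨1, h⟩ < y0)
    (hQsign : ∀ i : Fin k, 0 < (i:ℕ) → 0 < (-1:ℝ)^((i:ℕ)+1) * Q.eval (x i))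
    {aFar : ℝ} (haFar : aFar < min y0 (x ⟨k-1, by omega⟩))
    (hFar : 0 < (-1:ℝ)^(k+1) * Q.eval aFar) :
    ∃ z : Fin (k+1) → ℝ, StrictAnti z ∧ z ⟨0, by omega⟩ = 0 ∧
      Q = C c' * ∏ i, (X - C (z i)) := by
  classical
  set b : ℕ → ℝ := fun i => if i = 0 then y0 else if h : i < k then x ⟨i, h⟩ else aFar with hbdef
  have hb0 : b 0 = y0 := by simp [hbdef]
  have hbk : b k = aFar := by
    simp only [hbdef]
    rw [if_neg (by omega), dif_neg (by omega)]
  have hbmid : ∀ i (h0 : 0 < i) (h : i < k), b i = x ⟨i, h⟩ := by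
    intro i h0 h
    simp only [hbdef]
    rw [if_neg (by omega), dif_pos h]
  have hbneg : ∀ i, b i < 0 := by
    intro i
    rcases Nat.eq_zero_or_pos i with h | h
    · rw [h, hb0]; exact hy0neg
    rcases lt_or_ge i k with h2 | h2
    · rw [hbmid i h h2]; exact hxneg _ (by simpa using h)
    · have : b i = aFar := by
        simp only [hbdef]; rw [if_neg (by omega), dif_neg (by omega)]
      rw [this]
      have := min_le_left y0 (x ⟨k-1, by omega⟩)
      linarith
  have hbdec : ∀ i, i < k → b (i+1) < b i := by
    intro i hik
    rcases Nat.eq_zero_or_pos i with h | h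
    · subst h
      rw [hb0]
      by_cases h1 : 1 < k
      · rw [hbmid 1 one_pos h1]
        exact hy0gt h1
      · have hk1 : k = 1 := by omega
        have : b 1 = aFar := by rw [hk1] at hbk; exact hbk
        rw [this]
        have := min_le_left y0 (x ⟨k-1, by omega⟩)
        linarith
    · rw [hbmid i h hik]
      rcases lt_or_ge (i+1) k with h2 | h2
      · rw [hbmid (i+1) (by omega) h2]
        exact hx (by simp [Fin.lt_def])
      · have hik1 : i + 1 = k := by omega
        have hb1 : b (i+1) = aFar := by rw [hik1, hbk]
        rw [hb1]
        have h4 : (⟨k-1, by omega⟩ : Fin k) = ⟨i, hik⟩ := by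
          congr 1; omega
        have h5 : aFar < x ⟨k-1, by omega⟩ := lt_of_lt_of_le haFar (min_le_right _ _)
        rw [h4] at h5
        linarith
  have hbsign : ∀ i, i ≤ k → 0 < (-1:ℝ)^(i+1) * Q.eval (b i) := by
    intro i hik
    rcases Nat.eq_zero_or_pos i with h | h
    · subst h; rw [hb0]; simpa using hQy0
    rcases lt_or_ge i k with h2 | h2
    · rw [hbmid i h h2]
      exact hQsign ⟨i, h2⟩ (by simpa using h)
    · have hik2 : i = k := by omega
      subst hik2
      rw [hbk]
      exact hFar
  have hroot : ∀ i, i < k → ∃ z, z ∈ Set.Ioo (b (i+1)) (b i) ∧ Q.eval z = 0 := by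
    intro i hik
    apply stmt15_ivt_root Q (hbdec i hik)
    have h1 := hbsign (i+1) (by omega)
    have h2 := hbsign i (by omega)
    rw [pow_succ ((-1:ℝ)) (i+1)] at h1
    have h3 := mul_pos h1 h2
    have hA : (-1:ℝ)^(i+1) * (-1)^(i+1) = 1 := by
      rw [← pow_add, ← two_mul, pow_mul]; norm_num
    have h5 : (-1:ℝ)^(i+1) * -1 * Q.eval (b (i+1)) * ((-1)^(i+1) * Q.eval (b i))
        = -(((-1:ℝ)^(i+1) * (-1)^(i+1)) * (Q.eval (b (i+1)) * Q.eval (b i))) := by ring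
    rw [h5, hA, one_mul] at h3
    linarith
  set g : ℕ → ℝ := fun i => if h : i < k then (hroot i h).choose else 0 with hgdef
  have hg : ∀ i (h : i < k), g i ∈ Set.Ioo (b (i+1)) (b i) ∧ Q.eval (g i) = 0 := by
    intro i h
    simp only [hgdef, dif_pos h]
    exact (hroot i h).choose_spec
  set w : ℕ → ℝ := fun i => if i = 0 then 0 else if i - 1 < k then g (i-1) else aFar - i
    with hwdef
  have hw0 : w 0 = 0 := by simp [hwdef]
  have hwmid : ∀ i, 0 < i → i ≤ k → w i = g (i-1) := by
    intro i h0 hik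
    simp only [hwdef]
    rw [if_neg (by omega), if_pos (by omega)]
  have hwhigh : ∀ i, k < i → w i = aFar - i := by
    intro i hik
    simp only [hwdef]
    rw [if_neg (by omega), if_neg (by omega)]
  have hwsucc : ∀ i, w (i+1) < w i := by
    intro i
    rcases Nat.eq_zero_or_pos i with h | h
    · subst h
      rw [hw0, hwmid 1 one_pos hk]
      have := (hg 0 hk).1.2
      rw [hb0] at this
      simpa using lt_trans this hy0neg
    rcases lt_or_ge i k with h2 | h2
    · rw [hwmid i h (by omega), hwmid (i+1) (by omega) (by omega)]
      have ha := (hg i h2).1.2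
      have hb' := (hg (i-1) (by omega)).1.1
      have h4 : i - 1 + 1 = i := by omega
      rw [h4] at hb'
      simp only [Nat.add_sub_cancel]
      exact lt_trans ha hb'
    rcases Nat.eq_or_lt_of_le h2 with h3 | h3
    · subst h3
      rw [hwmid k (by omega) le_rfl, hwhigh (k+1) (by omega)]
      have ha := (hg (k-1) (by omega)).1.1
      have h4 : k - 1 + 1 = k := by omega
      rw [h4, hbk] at ha
      push_cast
      linarith
    · rw [hwhigh i h3, hwhigh (i+1) (by omega)]
      push_cast
      linarith
  have hwanti : StrictAnti w := strictAnti_nat_of_succ_lt hwsucc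
  have hwroot : ∀ i, i ≤ k → Q.eval (w i) = 0 := by
    intro i hik
    rcases Nat.eq_zero_or_pos i with h | h
    · subst h; rw [hw0]; exact hQ0
    · rw [hwmid i h hik]
      exact (hg (i-1) (by omega)).2
  set Sf : Finset ℝ := Finset.image (fun i : Fin (k+1) => w (i:ℕ)) Finset.univ with hSf
  have hinj : Function.Injective fun i : Fin (k+1) => w (i:ℕ) := by
    intro a b hab
    exact Fin.val_injective (hwanti.injective hab)
  have hcardS : Sf.card = k+1 := by
    rw [hSf, Finset.card_image_of_injective _ hinj, Finset.card_univ, Fintype.card_fin]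
  have hsub : Sf ⊆ Q.roots.toFinset := by
    intro a ha
    rw [hSf, Finset.mem_image] at ha
    obtain ⟨i, _, rfl⟩ := ha
    rw [Multiset.mem_toFinset, mem_roots hQne]
    exact hwroot i (by omega)
  have hcards : Multiset.card Q.roots ≤ k+1 := hQdeg ▸ Q.card_roots'
  have htf1 : k+1 ≤ Q.roots.toFinset.card := hcardS ▸ Finset.card_le_card hsub
  have htf2 : Q.roots.toFinset.card ≤ Multiset.card Q.roots := Q.roots.toFinset_card_le
  have hcardeq : Multiset.card Q.roots = k+1 := by omega
  have hnodup : Q.roots.Nodup := by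
    rw [← Multiset.toFinset_card_eq_card_iff_nodup]
    omega
  have hSeq : Sf = Q.roots.toFinset :=
    Finset.eq_of_subset_of_card_le hsub (by omega)
  have hrootsval : Q.roots = Sf.val := by
    rw [hSeq]
    exact (Multiset.dedup_eq_self.mpr hnodup).symm
  have hsplits : Q.Splits :=
    splits_iff_card_roots.mpr (by rw [hcardeq, hQdeg])
  have hfact := hsplits.eq_prod_roots
  have hprodeq : (Q.roots.map fun a => X - C a).prod
      = ∏ i : Fin (k+1), (X - C (w (i:ℕ))) := by
    rw [hrootsval]
    have : (Sf.val.map fun a => X - C a).prod = ∏ a ∈ Sf, (X - C a) := rfl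
    rw [this, hSf, Finset.prod_image (fun a _ b _ h => hinj h)]
  refine ⟨fun i => w (i:ℕ), ?_, by simpa using hw0, ?_⟩
  · intro a b hab
    exact hwanti (by exact_mod_cast hab)
  · rw [hfact, hlead, hprodeq]

open Polynomial in
private lemma stmt15_step {k n : ℕ} (hk : 1 ≤ k) (hkn : k ≤ n) {P Q : Polynomial ℝ} {c : ℝ}
    (hc : 0 < c) {x : Fin k → ℝ} (hx : StrictAnti x) (hx0 : x ⟨0, hk⟩ = 0)
    (hP : P = C c * ∏ i, (X - C (x i)))
    (hQ : Q = (1 + ((n : ℕ) : Polynomial ℝ)) * X * P + X * (1 - X) * derivative P) :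
    ∃ c' : ℝ, 0 < c' ∧ ∃ z : Fin (k+1) → ℝ, StrictAnti z ∧ z ⟨0, by omega⟩ = 0 ∧
      Q = C c' * ∏ i, (X - C (z i)) := by
  have hxneg : ∀ i : Fin k, 0 < (i:ℕ) → x i < 0 := by
    intro i hi
    rw [← hx0]
    exact hx (by simp [Fin.lt_def]; omega)
  -- basic facts about P
  have hm : (∏ i, (X - C (x i))).Monic :=
    monic_prod_of_monic _ _ fun i _ => monic_X_sub_C _
  have hprdeg : (∏ i, (X - C (x i))).natDegree = k := by
    rw [natDegree_prod _ _ fun i _ => X_sub_C_ne_zero (x i)]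
    simp
  have hPdeg : P.natDegree = k := by
    rw [hP, natDegree_C_mul hc.ne', hprdeg]
  have hcoeffk : P.coeff k = c := by
    have h1 := hm.coeff_natDegree
    rw [hprdeg] at h1
    rw [hP, coeff_C_mul, h1, mul_one]
  -- degree and leading coefficient of Q
  set D := derivative P with hD
  have hDdeg : D.natDegree ≤ k - 1 := by
    have h := natDegree_derivative_le P
    rw [hPdeg] at h
    exact h
  have hone : (1 + ((n : ℕ) : Polynomial ℝ)) = C ((1:ℝ) + n) := by
    push_cast
    simp
  have hsplit : X * (1 - X) * D = X * D - X^2 * D := by ring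
  have hcoeff1 : ((1 + ((n : ℕ) : Polynomial ℝ)) * X * P).coeff (k+1) = (1 + (n:ℝ)) * c := by
    rw [hone, mul_assoc, coeff_C_mul, coeff_X_mul, hcoeffk]
  have hXD : (X * D).coeff (k+1) = 0 := by
    rw [coeff_X_mul]
    exact coeff_eq_zero_of_natDegree_lt (by omega)
  have hX2D : (X^2 * D).coeff (k+1) = (k:ℝ) * c := by
    have h1 : k + 1 = (k-1) + 2 := by omega
    rw [h1, coeff_X_pow_mul]
    rw [hD, coeff_derivative]
    have h2 : k - 1 + 1 = k := by omega
    rw [h2, hcoeffk, Nat.cast_sub hk]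
    push_cast
    ring
  have hQcoeff : Q.coeff (k+1) = (1 + (n:ℝ) - k) * c := by
    rw [hQ, coeff_add, hcoeff1, hsplit, coeff_sub, hXD, hX2D]
    ring
  have hc' : 0 < (1 + (n:ℝ) - k) * c := by
    apply mul_pos _ hc
    have : (k:ℝ) ≤ n := by exact_mod_cast hkn
    linarith
  have hQne : Q ≠ 0 := fun h => by
    rw [h, coeff_zero] at hQcoeff
    exact absurd hQcoeff.symm (ne_of_gt hc')
  have hQdegle : Q.natDegree ≤ k + 1 := by
    rw [hQ]
    apply le_trans (natDegree_add_le _ _)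
    apply max_le
    · apply le_trans (natDegree_mul_le)
      apply le_trans (add_le_add natDegree_mul_le le_rfl)
      have h0 : (1 + ((n : ℕ) : Polynomial ℝ)).natDegree = 0 := by
        rw [hone]; exact natDegree_C _
      simp [hPdeg, h0]
      omega
    · apply le_trans (natDegree_mul_le)
      have h1 : (X * (1 - X) : Polynomial ℝ).natDegree ≤ 2 := by
        apply le_trans (natDegree_mul_le)
        have h2 : (1 - X : Polynomial ℝ).natDegree ≤ 1 := by
          apply le_trans (natDegree_sub_le _ _)
          simp
        rw [natDegree_X]
        omega
      omega
  have hQdeg : Q.natDegree = k + 1 :=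
    le_antisymm hQdegle (le_natDegree_of_ne_zero (hQcoeff ▸ ne_of_gt hc'))
  have hlead : Q.leadingCoeff = (1 + (n:ℝ) - k) * c := by
    rw [leadingCoeff, hQdeg, hQcoeff]
  -- sign facts at the roots of P
  have hDev : ∀ i, (derivative P).eval (x i) = c * ∏ j ∈ Finset.univ.erase i, (x i - x j) := by
    intro i
    rw [hP, derivative_mul, derivative_C, zero_mul, zero_add, eval_mul, eval_C,
      stmt15_eval_derivative_prod x hx.injective i]
  have hDsign : ∀ i : Fin k, 0 < (-1:ℝ)^(i:ℕ) * (derivative P).eval (x i) := by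
    intro i
    rw [hDev i]
    have := stmt15_prod_sign x hx i
    nlinarith
  have hPev : ∀ i, P.eval (x i) = 0 := by
    intro i
    rw [hP, eval_mul, eval_prod]
    apply mul_eq_zero_of_right
    apply Finset.prod_eq_zero (Finset.mem_univ i)
    simp
  have hQev : ∀ i, Q.eval (x i) = x i * (1 - x i) * (derivative P).eval (x i) := by
    intro i
    rw [hQ]
    simp [hPev i, hD]
  have hQsign : ∀ i : Fin k, 0 < (i:ℕ) → 0 < (-1:ℝ)^((i:ℕ)+1) * Q.eval (x i) := by
    intro i hi
    rw [hQev i, pow_succ]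
    have h1 : x i * (1 - x i) < 0 := by nlinarith [hxneg i hi]
    have h2 : (-1:ℝ)^(i:ℕ) * -1 * (x i * (1 - x i) * (derivative P).eval (x i))
        = (-(x i * (1 - x i))) * ((-1:ℝ)^(i:ℕ) * (derivative P).eval (x i)) := by ring
    rw [h2]
    exact mul_pos (neg_pos.mpr h1) (hDsign i)
  have hQ0 : Q.eval 0 = 0 := by
    simp [hQ]
  -- near zero
  set B : Polynomial ℝ := (1 + ((n : ℕ) : Polynomial ℝ)) * P + (1 - X) * derivative P with hB
  have hQXB : Q = X * B := by rw [hQ, hB]; ring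
  have hB0 : 0 < B.eval 0 := by
    have h1 := hDsign ⟨0, hk⟩
    rw [hx0] at h1
    simp only [Fin.val_mk, pow_zero, one_mul] at h1
    have h2 := hPev ⟨0, hk⟩
    rw [hx0] at h2
    rw [hB]
    simp [h2]
    exact h1
  obtain ⟨ε, hε, hball⟩ := Metric.mem_nhds_iff.mp
    (B.continuous.continuousAt.preimage_mem_nhds (Ioi_mem_nhds hB0))
  set lower : ℝ := if h : 1 < k then x ⟨1, h⟩ else -1 with hlow
  have hlowerneg : lower < 0 := by
    rw [hlow]
    split
    · exact hxneg _ (by simp)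
    · norm_num
  set y0 : ℝ := max lower (-ε) / 2 with hy0
  have hmaxneg : max lower (-ε) < 0 := max_lt hlowerneg (by linarith)
  have hy0neg : y0 < 0 := by rw [hy0]; linarith
  have hy0gtm : max lower (-ε) < y0 := by rw [hy0]; linarith
  have hy0lower : lower < y0 := lt_of_le_of_lt (le_max_left _ _) hy0gtm
  have hy0mem : y0 ∈ Metric.ball (0:ℝ) ε := by
    rw [Metric.mem_ball, Real.dist_eq, sub_zero, abs_of_neg hy0neg]
    have : -ε ≤ max lower (-ε) := le_max_right _ _
    rw [hy0]
    linarith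
  have hBy0 : 0 < B.eval y0 := hball hy0mem
  have hQy0 : Q.eval y0 < 0 := by
    rw [hQXB, eval_mul, eval_X]
    exact mul_neg_of_neg_of_pos hy0neg hBy0
  have hy0gt : ∀ h : 1 < k, x ⟨1, h⟩ < y0 := by
    intro h
    have : lower = x ⟨1, h⟩ := by rw [hlow]; simp [h]
    rw [← this]
    exact hy0lower
  -- far left
  obtain ⟨aFar, haFar, hFar⟩ :=
    stmt15_far_left (M := min y0 (x ⟨k-1, by omega⟩)) hc' hQdeg hlead
  -- assemble
  obtain ⟨z, hz1, hz2, hz3⟩ := stmt15_assemble hk hc' hx hx0 hxneg hQdeg hlead hQne hQ0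
    hy0neg hQy0 hy0gt hQsign haFar hFar
  exact ⟨(1 + (n:ℝ) - k) * c, hc', z, hz1, hz2, hz3⟩

open Polynomial in
/-- the polynomials `C^{des}_{r,k}` defined by `C^{des}_{r,1} = t` and
`C^{des}_{r,k+1} = (1 + rk) t C^{des}_{r,k} + t(1-t) (C^{des}_{r,k})'` have only real roots. -/
theorem stmt15 (r : ℕ) (hr : 2 ≤ r) (C : ℕ → Polynomial ℝ) (h1 : C 1 = X)
    (hrec : ∀ k, 1 ≤ k →
      C (k + 1) = (1 + ((r * k : ℕ) : Polynomial ℝ)) * X * C k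
        + X * (1 - X) * derivative (C k)) :
    ∀ k, 1 ≤ k → ∀ z : ℂ, ((C k).map (algebraMap ℝ ℂ)).IsRoot z → z.im = 0 := by
  have key : ∀ k, ∀ hk : 1 ≤ k, ∃ c : ℝ, 0 < c ∧ ∃ x : Fin k → ℝ, StrictAnti x ∧
      x ⟨0, hk⟩ = 0 ∧ C k = Polynomial.C c * ∏ i, (X - Polynomial.C (x i)) := by
    intro k hk
    induction k, hk using Nat.le_induction with
    | base =>
      refine ⟨1, one_pos, fun _ => 0, ?_, rfl, ?_⟩
      · intro a b hab
        exact absurd hab (by omega)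
      · rw [h1]
        simp
    | succ k hk ih =>
      obtain ⟨c, hc, x, hx, hx0, hrep⟩ := ih
      have hkn : k ≤ r * k := Nat.le_mul_of_pos_left k (by omega)
      exact stmt15_step hk hkn hc hx hx0 hrep (hrec k hk)
  intro k hk z hz
  obtain ⟨c, hc, x, hx, hx0, hrep⟩ := key k hk
  rw [hrep] at hz
  rw [IsRoot, Polynomial.map_mul, Polynomial.map_prod] at hz
  simp only [eval_mul, map_C, eval_C, eval_prod, Polynomial.map_sub, map_X, eval_sub, eval_X,
    mul_eq_zero, Finset.prod_eq_zero_iff] at hz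
  rcases hz with hz | ⟨i, _, hz⟩
  · have : (algebraMap ℝ ℂ) c ≠ 0 := by
      rw [ne_eq, _root_.map_eq_zero]
      exact hc.ne'
    exact absurd hz this
  · have : z = algebraMap ℝ ℂ (x i) := by
      have := sub_eq_zero.mp hz
      simpa using this
    rw [this]
    simp [Complex.ofReal_im]
end

section
/- Let r ≥ 2 and k ≥ 1, and let X be the random variable giving the number of descents of a uniformly random permutation π ∈ S_{rk+1} whose inverse is a 2134⋯(r+1)-cluster. Then the expected value of X is (rk+1)/(r+1). -/
open scoped Classical

noncomputable section

/-!
Deleting the last window is a bijection from `clusterSet r (k + 1)` onto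
`clusterSet r k × Fin (r * k + 1)`: in one-line notation, `σ ∈ clusterSet r (k + 1)` arises
from `π ∈ clusterSet r k` by inserting the letter `r * k + 1` at a position `v ≤ r * k` and
appending the fixed points `r * k + 2, …, r * (k + 1)`. The inserted letter creates a descent
at `v` and destroys the descent at `v - 1`, if there was one, so summing over `v` shows that the
descent total `S k` and the cardinality `C k` satisfy
`S (k + 1) + S k = (r * k + 1) * (S k + C k)` and `C (k + 1) = (r * k + 1) * C k`.
From `S 1 = C 1 = 1`, induction gives `(r + 1) * S k = (r * k + 1) * C k`.
-/

open Finset Equiv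

section ofPerm

variable {n : ℕ}

lemma ofPerm_apply (σ : Perm (Fin n)) {i : ℕ} (hi : i < n) : ofPerm σ i = σ ⟨i, hi⟩ := by
  simp [ofPerm, hi]

lemma ofPerm_lt (σ : Perm (Fin n)) {i : ℕ} (hi : i < n) : ofPerm σ i < n := by
  rw [ofPerm_apply σ hi]
  exact Fin.isLt _

lemma ofPerm_inv_ofPerm (σ : Perm (Fin n)) {i : ℕ} (hi : i < n) :
    ofPerm σ⁻¹ (ofPerm σ i) = i := by
  rw [ofPerm_apply σ hi, ofPerm_apply _ (Fin.isLt _)]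
  simp

lemma ofPerm_ofPerm_inv (σ : Perm (Fin n)) {i : ℕ} (hi : i < n) :
    ofPerm σ (ofPerm σ⁻¹ i) = i := by
  simpa using ofPerm_inv_ofPerm σ⁻¹ hi

lemma ofPerm_injOn (σ : Perm (Fin n)) : Set.InjOn (ofPerm σ) (Set.Iio n) := fun i hi j hj h => by
  rw [← ofPerm_inv_ofPerm σ hi, h, ofPerm_inv_ofPerm σ hj]

lemma ofPerm_injective {σ τ : Perm (Fin n)} (h : ∀ i < n, ofPerm σ i = ofPerm τ i) :
    σ = τ :=
  Equiv.ext fun x => Fin.ext <| by simpa [ofPerm_apply _ x.2] using h x x.2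

lemma card_le_ofPerm (σ : Perm (Fin n)) {x : ℕ} {A : Finset ℕ}
    (hA : ∀ a ∈ A, a < n ∧ ofPerm σ a < ofPerm σ x) : #A ≤ ofPerm σ x := by
  simpa using card_le_card_of_injOn (t := range (ofPerm σ x)) (ofPerm σ)
    (fun a ha => mem_range.2 (hA a ha).2) fun a ha b hb => ofPerm_injOn σ (hA a ha).1 (hA b hb).1

lemma self_le_ofPerm_of_forall_lt (σ : Perm (Fin n)) {x : ℕ} (hx : x < n)
    (h : ∀ p < x, ofPerm σ p < ofPerm σ x) : x ≤ ofPerm σ x := by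
  simpa using card_le_ofPerm σ (A := range x) fun a ha =>
    ⟨(mem_range.1 ha).trans hx, h a (mem_range.1 ha)⟩

lemma ofPerm_le_self_of_increasing (σ : Perm (Fin n)) {x : ℕ}
    (h : ∀ y, x ≤ y → y + 1 < n → ofPerm σ y < ofPerm σ (y + 1)) : ofPerm σ x ≤ x := by
  have hgrow : ∀ d, x + d < n → ofPerm σ x + d ≤ ofPerm σ (x + d) := by
    intro d
    induction d with
    | zero => simp
    | succ d ih =>
      intro hd
      have := h (x + d) (by omega) (by omega)
      have := ih (by omega)
      rw [← add_assoc x d 1]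
      omega
  rcases lt_or_ge x n with hx | hx
  · have := hgrow (n - 1 - x) (by omega)
    have := ofPerm_lt σ (show x + (n - 1 - x) < n by omega)
    omega
  · simp [ofPerm, not_lt.2 hx]

def permOfWord (w : ℕ → ℕ) (hw : ∀ i < n, w i < n) (hinj : Set.InjOn w (Set.Iio n)) :
    Perm (Fin n) :=
  Equiv.ofBijective (fun i => ⟨w i, hw i i.2⟩) <| Finite.injective_iff_bijective.1
    fun i j h => Fin.ext <| hinj i.2 j.2 (congrArg Fin.val h)

lemma ofPerm_permOfWord {w : ℕ → ℕ} (hw : ∀ i < n, w i < n) (hinj : Set.InjOn w (Set.Iio n))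
    {i : ℕ} (hi : i < n) : ofPerm (permOfWord w hw hinj) i = w i := by
  rw [ofPerm_apply _ hi]
  rfl

end ofPerm

/-- `Fin.succAbove` on `ℕ`. -/
def skip (v u : ℕ) : ℕ := if u < v then u else u + 1

lemma skip_strictMono (v : ℕ) : StrictMono (skip v) := fun a b h => by
  unfold skip; split_ifs <;> omega

lemma skip_ne (v u : ℕ) : skip v u ≠ v := by
  unfold skip; split_ifs <;> omega

lemma skip_le (v u : ℕ) : skip v u ≤ u + 1 := by
  unfold skip; split_ifs <;> omega

section descents

lemma desNum_eq_sum (n : ℕ) (w : ℕ → ℕ) :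
    desNum n w = ∑ i ∈ range (n - 1), if w (i + 1) < w i then 1 else 0 :=
  card_filter _ _

lemma desNum_eq_of_monotone_tail {n N : ℕ} {w : ℕ → ℕ} (hnN : n ≤ N)
    (htail : ∀ i, n - 1 ≤ i → i + 1 < N → w i ≤ w (i + 1)) : desNum N w = desNum n w := by
  rw [desNum_eq_sum, desNum_eq_sum, ← sum_range_add_sum_Ico _ (Nat.sub_le_sub_right hnN 1)]
  refine add_eq_left.2 (sum_eq_zero fun i hi => if_neg ?_)
  rw [mem_Ico] at hi
  exact not_lt.2 (htail i hi.1 (by omega))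

/-- Inserting a letter `M` larger than all letters of `O` at position `v < m` creates a descent
at `v` and destroys the descent at `v - 1`, if there was one. -/
lemma desNum_insert {m M v : ℕ} {O W : ℕ → ℕ} (hv : v < m) (hO : ∀ i < m, O i < M)
    (hW : ∀ i ≤ m, W i = if i < v then O i else if i = v then M else O (i - 1)) :
    desNum (m + 1) W + (if 0 < v ∧ O v < O (v - 1) then 1 else 0) = desNum m O + 1 := by
  let d (w : ℕ → ℕ) (i : ℕ) : ℕ := if w (i + 1) < w i then 1 else 0
  have hpre : ∑ i ∈ range v, d W i + (if 0 < v ∧ O v < O (v - 1) then 1 else 0)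
      = ∑ i ∈ range v, d O i := by
    rcases v with _ | u
    · simp
    have hinit : ∑ i ∈ range u, d W i = ∑ i ∈ range u, d O i := sum_congr rfl fun i hi => by
      rw [mem_range] at hi
      simp only [d, hW i (by omega), hW (i + 1) (by omega), if_pos (by omega : i < u + 1),
        if_pos (by omega : i + 1 < u + 1)]
    have hWu : W u = O u := by rw [hW u (by omega), if_pos (by omega)]
    have hWv : W (u + 1) = M := by rw [hW _ (by omega), if_neg (by omega), if_pos rfl]
    have hlast : d W u = 0 := if_neg <| by rw [hWu, hWv]; exact not_lt.2 (hO u (by omega)).le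
    rw [sum_range_succ, sum_range_succ, hinit, hlast]
    simp [d]
  have hat : d W v = 1 := by
    have hWv : W v = M := by rw [hW v hv.le, if_neg (lt_irrefl v), if_pos rfl]
    have hWv1 : W (v + 1) = O v := by
      rw [hW (v + 1) hv, if_neg (by omega), if_neg (by omega), Nat.add_sub_cancel]
    simp only [d, hWv, hWv1, if_pos (hO v hv)]
  have hpost : ∑ i ∈ Ico (v + 1) m, d W i = ∑ i ∈ Ico v (m - 1), d O i := by
    rw [show m = m - 1 + 1 by omega, ← sum_Ico_add', Nat.add_sub_cancel]
    refine sum_congr rfl fun i hi => ?_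
    rw [mem_Ico] at hi
    simp only [d, hW (i + 1) (by omega), hW (i + 1 + 1) (by omega),
      if_neg (by omega : ¬ i + 1 < v), if_neg (by omega : i + 1 ≠ v),
      if_neg (by omega : ¬ i + 1 + 1 < v), if_neg (by omega : i + 1 + 1 ≠ v), Nat.add_sub_cancel]
  rw [desNum_eq_sum, desNum_eq_sum, Nat.add_sub_cancel, ← sum_range_add_sum_Ico _ hv.le,
    sum_eq_sum_Ico_succ_bot hv, ← sum_range_add_sum_Ico _ (show v ≤ m - 1 by omega)]
  change ∑ i ∈ range v, d W i + (d W v + ∑ i ∈ Ico (v + 1) m, d W i) + _ =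
    ∑ i ∈ range v, d O i + ∑ i ∈ Ico v (m - 1), d O i + 1
  rw [hat, hpost, ← hpre]
  ring

lemma sum_descent_before (m : ℕ) (O : ℕ → ℕ) :
    ∑ v ∈ range m, (if 0 < v ∧ O v < O (v - 1) then 1 else 0) = desNum m O := by
  rcases m with _ | m
  · simp [desNum]
  rw [sum_range_succ', desNum_eq_sum, Nat.add_sub_cancel]
  simp

end descents

section insertion

variable {m N : ℕ}

def insWord (O : ℕ → ℕ) (m v i : ℕ) : ℕ :=
  if i < v then O i else if i = v then m else if i ≤ m then O (i - 1) else i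

lemma insWord_skip {O : ℕ → ℕ} {v u : ℕ} (hu : u < m) : insWord O m v (skip v u) = O u := by
  unfold insWord skip
  split_ifs <;> first | rfl | omega

lemma insWord_injective {O : ℕ → ℕ} {v : ℕ} (hv : v < m) (hO : ∀ i < m, O i < m)
    (hinj : Set.InjOn O (Set.Iio m)) : Function.Injective (insWord O m v) := by
  intro i j h
  have key : ∀ a b, a < m → b < m → O a = O b → a = b := fun a b ha hb => @hinj a ha b hb
  have := key i j; have := key (i - 1) j; have := key i (j - 1); have := key (i - 1) (j - 1)
  have := hO i; have := hO j; have := hO (i - 1); have := hO (j - 1)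
  unfold insWord at h
  split_ifs at h <;> omega

def insPerm (h : m < N) (π : Perm (Fin m)) (v : Fin m) : Perm (Fin N) :=
  permOfWord (insWord (ofPerm π) m v)
    (fun i hi => by
      have := ofPerm_lt π (i := i); have := ofPerm_lt π (i := i - 1)
      unfold insWord; split_ifs <;> omega)
    (insWord_injective v.2 (fun _ => ofPerm_lt π) (ofPerm_injOn π)).injOn

variable (h : m < N) (π : Perm (Fin m)) (v : Fin m)

lemma ofPerm_insPerm {i : ℕ} (hi : i < N) :
    ofPerm (insPerm h π v) i = insWord (ofPerm π) m v i :=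
  ofPerm_permOfWord _ _ hi

lemma ofPerm_insPerm_skip {u : ℕ} (hu : u < m) :
    ofPerm (insPerm h π v) (skip v u) = ofPerm π u := by
  rw [ofPerm_insPerm h π v (by have := skip_le v u; omega), insWord_skip hu]

lemma ofPerm_insPerm_self : ofPerm (insPerm h π v) v = m := by
  rw [ofPerm_insPerm h π v (by omega), insWord, if_neg (lt_irrefl _), if_pos rfl]

lemma ofPerm_insPerm_of_gt {i : ℕ} (hmi : m < i) (hi : i < N) :
    ofPerm (insPerm h π v) i = i := by
  rw [ofPerm_insPerm h π v hi, insWord, if_neg (by omega), if_neg (by omega), if_neg (by omega)]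

lemma ofPerm_insPerm_inv_of_lt {i : ℕ} (hi : i < m) :
    ofPerm (insPerm h π v)⁻¹ i = skip v (ofPerm π⁻¹ i) := by
  have hu := ofPerm_lt π⁻¹ hi
  conv_lhs => rw [← ofPerm_ofPerm_inv π hi, ← ofPerm_insPerm_skip h π v hu]
  exact ofPerm_inv_ofPerm _ (by have := skip_le v (ofPerm π⁻¹ i); omega)

lemma ofPerm_insPerm_inv_self : ofPerm (insPerm h π v)⁻¹ m = v := by
  simpa only [ofPerm_insPerm_self] using ofPerm_inv_ofPerm (insPerm h π v) (i := v) (by omega)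

lemma ofPerm_insPerm_inv_of_gt {i : ℕ} (hmi : m < i) (hi : i < N) :
    ofPerm (insPerm h π v)⁻¹ i = i := by
  conv_lhs => rw [← ofPerm_insPerm_of_gt h π v hmi hi]
  exact ofPerm_inv_ofPerm _ hi

lemma desNum_insPerm :
    desNum N (ofPerm (insPerm h π v)) +
        (if 0 < (v : ℕ) ∧ ofPerm π v < ofPerm π (v - 1) then 1 else 0)
      = desNum m (ofPerm π) + 1 := by
  have hv := v.2
  have htail : ∀ i, m + 1 - 1 ≤ i → i + 1 < N →
      ofPerm (insPerm h π v) i ≤ ofPerm (insPerm h π v) (i + 1) := by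
    intro i hmi hi
    rw [ofPerm_insPerm_of_gt h π v (by omega) hi]
    rw [Nat.add_sub_cancel] at hmi
    rcases hmi.eq_or_lt with rfl | hmi
    · rw [ofPerm_insPerm h π v (by omega), insWord, if_neg (by omega), if_neg (by omega),
        if_pos le_rfl]
      exact (ofPerm_lt π (by omega)).le.trans (Nat.le_succ _)
    · rw [ofPerm_insPerm_of_gt h π v hmi (by omega)]
      omega
  rw [desNum_eq_of_monotone_tail (by omega) htail]
  refine desNum_insert hv (fun _ => ofPerm_lt π) fun i hi => ?_
  rw [ofPerm_insPerm h π v (by omega), insWord]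
  simp [hi]

lemma sum_desNum_insPerm :
    ∑ v, desNum N (ofPerm (insPerm h π v)) + desNum m (ofPerm π) =
      m * (desNum m (ofPerm π) + 1) := by
  have hsum := sum_congr rfl fun v (_ : v ∈ univ) => desNum_insPerm h π v
  rw [sum_add_distrib, Fin.sum_univ_eq_sum_range
      (fun v => if 0 < v ∧ ofPerm π v < ofPerm π (v - 1) then 1 else 0),
    sum_descent_before] at hsum
  simpa using hsum

lemma insPerm_injective {π₁ π₂ : Perm (Fin m)} {v₁ v₂ : Fin m}
    (he : insPerm h π₁ v₁ = insPerm h π₂ v₂) : π₁ = π₂ ∧ v₁ = v₂ := by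
  have hv : v₁ = v₂ := Fin.ext <| by
    rw [← ofPerm_insPerm_inv_self h π₁ v₁, ← ofPerm_insPerm_inv_self h π₂ v₂, he]
  subst hv
  refine ⟨ofPerm_injective fun u hu => ?_, rfl⟩
  rw [← ofPerm_insPerm_skip h π₁ v₁ hu, ← ofPerm_insPerm_skip h π₂ v₁ hu, he]

end insertion

section cluster

variable {r k : ℕ} {w : ℕ → ℕ}

lemma isCluster_succ_iff :
    IsCluster r (k + 1) w ↔ IsCluster r k w ∧
      (w (r * k + 1) < w (r * k) ∧ w (r * k) < w (r * k + 2) ∧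
        ∀ l, 2 ≤ l → l < r → w (r * k + l) < w (r * k + l + 1)) :=
  Nat.forall_lt_succ_right

lemma isCluster_comp_iff {f : ℕ → ℕ} (hf : StrictMono f) :
    IsCluster r k (f ∘ w) ↔ IsCluster r k w := by
  simp only [IsCluster, Function.comp, hf.lt_iff_lt]

lemma isCluster_congr (hr : 2 ≤ r) {w' : ℕ → ℕ} (h : ∀ i ≤ r * k, w i = w' i) :
    IsCluster r k w ↔ IsCluster r k w' := by
  refine forall₂_congr fun j hj => ?_
  have hwin : r * j + r ≤ r * k := by nlinarith
  rw [h _ (by omega), h _ (by omega), h (r * j + 2) (by omega)]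
  refine and_congr_right' <| and_congr_right' <| forall_congr' fun l =>
    imp_congr_right fun _ => imp_congr_right fun hl => ?_
  rw [h _ (by omega), h _ (by omega)]

lemma IsCluster.strictMonoOn_window (hw : IsCluster r k w) {j : ℕ} (hj : j < k) :
    StrictMonoOn (fun l => w (r * j + l)) (Set.Icc 2 r) :=
  strictMonoOn_of_lt_succ Set.ordConnected_Icc fun a _ ha ha' => by
    simp only [Order.succ_eq_add_one, Set.mem_Icc] at ha ha' ⊢
    exact (hw j hj).2.2 a ha.1 (by omega)

lemma IsCluster.lt_of_lt_window (hw : IsCluster r k w) {j a : ℕ} (hj : j < k) (ha : 2 ≤ a)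
    (har : a ≤ r) (hbot : ∀ p < r * j, w p < w (r * j)) :
    ∀ p < r * j + a, w p < w (r * j + a) := by
  have hmono := hw.strictMonoOn_window hj
  have h0 : w (r * j) < w (r * j + a) :=
    (hw j hj).2.1.trans_le (hmono.monotoneOn ⟨le_rfl, by omega⟩ ⟨ha, har⟩ ha)
  intro p hp
  rcases lt_trichotomy p (r * j) with hp' | rfl | hp'
  · exact (hbot p hp').trans h0
  · exact h0
  obtain ⟨b, rfl⟩ := Nat.exists_eq_add_of_lt hp'
  rcases b with _ | b
  · exact (hw j hj).1.trans h0
  · exact hmono (a := b + 2) ⟨by omega, by omega⟩ ⟨ha, har⟩ (by omega)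

lemma IsCluster.lt_window_bot (hr : 2 ≤ r) (hw : IsCluster r k w) :
    ∀ j ≤ k, ∀ p < r * j, w p < w (r * j) := by
  intro j
  induction j with
  | zero => simp
  | succ j ih =>
    intro hj
    rw [mul_add_one]
    exact hw.lt_of_lt_window (by omega) hr le_rfl (ih (by omega))

lemma IsCluster.ofPerm_inv_last (hr : 2 ≤ r) {σ : Perm (Fin (r * k + 1))}
    (hσ : IsCluster r k (ofPerm σ⁻¹)) : ofPerm σ⁻¹ (r * k) = r * k :=
  le_antisymm (Nat.lt_succ_iff.1 (ofPerm_lt _ (by omega)))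
    (self_le_ofPerm_of_forall_lt _ (by omega) (hσ.lt_window_bot hr k le_rfl))

lemma IsCluster.ofPerm_inv_of_gt (hr : 2 ≤ r) {σ : Perm (Fin (r * (k + 1) + 1))}
    (hσ : IsCluster r (k + 1) (ofPerm σ⁻¹)) {i : ℕ} (hi : r * k + 1 < i)
    (hiN : i < r * (k + 1) + 1) : ofPerm σ⁻¹ i = i := by
  have hN : r * (k + 1) = r * k + r := mul_add_one r k
  obtain ⟨a, rfl⟩ : ∃ a, i = r * k + a := ⟨i - r * k, by omega⟩
  refine le_antisymm (ofPerm_le_self_of_increasing _ fun y hy hyN => ?_)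
    (self_le_ofPerm_of_forall_lt _ hiN (hσ.lt_of_lt_window (by omega) (by omega) (by omega)
      (hσ.lt_window_bot hr k (by omega))))
  obtain ⟨b, rfl⟩ : ∃ b, y = r * k + b := ⟨y - r * k, by omega⟩
  exact hσ.strictMonoOn_window (j := k) (by omega) (a := b) (b := b + 1) ⟨by omega, by omega⟩
    ⟨by omega, by omega⟩ (by omega)

lemma IsCluster.ofPerm_inv_last_window_bot (hr : 2 ≤ r) {σ : Perm (Fin (r * (k + 1) + 1))}
    (hσ : IsCluster r (k + 1) (ofPerm σ⁻¹)) : ofPerm σ⁻¹ (r * k) = r * k + 1 := by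
  have hup : ofPerm σ⁻¹ (r * k) < ofPerm σ⁻¹ (r * k + 2) := (hσ k (by omega)).2.1
  rw [hσ.ofPerm_inv_of_gt hr (i := r * k + 2) (by omega) (by nlinarith)] at hup
  have hlow := card_le_ofPerm σ⁻¹ (x := r * k) (A := insert (r * k + 1) (range (r * k))) <| by
    intro a ha
    rw [mem_insert, mem_range] at ha
    rcases ha with rfl | ha
    · exact ⟨by nlinarith, (hσ k (by omega)).1⟩
    · exact ⟨by nlinarith, hσ.lt_window_bot hr k (by omega) a ha⟩
  rw [card_insert_of_notMem (by simp), card_range] at hlow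
  omega

lemma IsCluster.ofPerm_inv_lt (hr : 2 ≤ r) {σ : Perm (Fin (r * (k + 1) + 1))}
    (hσ : IsCluster r (k + 1) (ofPerm σ⁻¹)) : ofPerm σ⁻¹ (r * k + 1) < r * k + 1 :=
  hσ.ofPerm_inv_last_window_bot hr ▸ (hσ k (by omega)).1

end cluster

section recursion

variable {r k : ℕ}

lemma isCluster_insPerm_iff (hr : 2 ≤ r) (h : r * k + 1 < r * (k + 1) + 1)
    (π : Perm (Fin (r * k + 1))) (v : Fin (r * k + 1)) :
    IsCluster r (k + 1) (ofPerm (insPerm h π v)⁻¹) ↔ IsCluster r k (ofPerm π⁻¹) := by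
  have hprefix : IsCluster r k (ofPerm (insPerm h π v)⁻¹) ↔ IsCluster r k (ofPerm π⁻¹) := by
    rw [isCluster_congr hr (w' := skip v ∘ ofPerm π⁻¹) fun i hi =>
      ofPerm_insPerm_inv_of_lt h π v (by omega), isCluster_comp_iff (skip_strictMono v)]
  rw [isCluster_succ_iff, hprefix, and_iff_left_iff_imp]
  intro hπ
  have hN : r * (k + 1) = r * k + r := mul_add_one r k
  have hbot : ofPerm (insPerm h π v)⁻¹ (r * k) = r * k + 1 := by
    rw [ofPerm_insPerm_inv_of_lt h π v (by omega), hπ.ofPerm_inv_last hr, skip, if_neg (by omega)]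
  have hmid := ofPerm_insPerm_inv_self h π v
  have htop : ∀ l, 2 ≤ l → l ≤ r → ofPerm (insPerm h π v)⁻¹ (r * k + l) = r * k + l :=
    fun l hl hlr => ofPerm_insPerm_inv_of_gt h π v (by omega) (by omega)
  have hv := v.2
  have h2 := htop 2 le_rfl hr
  refine ⟨by omega, by omega, fun l hl hlr => ?_⟩
  rw [htop l hl hlr.le, add_assoc, htop (l + 1) (by omega) hlr]
  omega

lemma IsCluster.exists_insPerm_eq (hr : 2 ≤ r) (h : r * k + 1 < r * (k + 1) + 1)
    {σ : Perm (Fin (r * (k + 1) + 1))} (hσ : IsCluster r (k + 1) (ofPerm σ⁻¹)) :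
    ∃ π v, insPerm h π v = σ := by
  set m := r * k + 1
  set v := ofPerm σ⁻¹ m
  have hv : v < m := hσ.ofPerm_inv_lt hr
  have hWv : ofPerm σ v = m := ofPerm_ofPerm_inv σ h
  have hWtail : ∀ i, m < i → i < r * (k + 1) + 1 → ofPerm σ i = i := fun i hi hiN => by
    conv_lhs => rw [← hσ.ofPerm_inv_of_gt hr hi hiN]
    exact ofPerm_ofPerm_inv σ hiN
  have hskip : ∀ u < m, skip v u < r * (k + 1) + 1 := fun u hu => by
    have := skip_le v u; omega
  have hO : ∀ u < m, ofPerm σ (skip v u) < m := by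
    intro u hu
    have hp := hskip u hu
    have hne : ofPerm σ (skip v u) ≠ m := fun he =>
      skip_ne v u (ofPerm_injOn σ hp (show v < _ by omega) (he.trans hWv.symm))
    have hlt := ofPerm_lt σ hp
    by_contra hge
    have := ofPerm_injOn σ hp hlt (hWtail _ (by omega) hlt).symm
    have := skip_le v u
    omega
  have hOinj : Set.InjOn (fun u => ofPerm σ (skip v u)) (Set.Iio m) := fun a ha b hb hab =>
    (skip_strictMono v).injective (ofPerm_injOn σ (hskip a ha) (hskip b hb) hab)
  refine ⟨permOfWord _ hO hOinj, ⟨v, hv⟩, ofPerm_injective fun i hi => ?_⟩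
  rw [ofPerm_insPerm h _ _ hi, insWord, Fin.val_mk]
  split_ifs with h1 h2 h3
  · rw [ofPerm_permOfWord _ _ (by omega), skip, if_pos h1]
  · rw [h2, hWv]
  · rw [ofPerm_permOfWord _ _ (by omega), skip, if_neg (by omega), Nat.sub_add_cancel (by omega)]
  · exact (hWtail i (by omega) hi).symm

lemma clusterSet_succ_eq_image (hr : 2 ≤ r) (h : r * k + 1 < r * (k + 1) + 1) :
    clusterSet r (k + 1) = (clusterSet r k ×ˢ univ).image fun p => insPerm h p.1 p.2 := by
  ext σ
  simp only [clusterSet, mem_filter, mem_univ, true_and, mem_image, mem_product, and_true,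
    Prod.exists]
  constructor
  · intro hσ
    obtain ⟨π, v, rfl⟩ := hσ.exists_insPerm_eq hr h
    exact ⟨π, v, (isCluster_insPerm_iff hr h π v).1 hσ, rfl⟩
  · rintro ⟨π, v, hπ, rfl⟩
    exact (isCluster_insPerm_iff hr h π v).2 hπ

lemma sum_clusterSet_succ {M : Type*} [AddCommMonoid M] (hr : 2 ≤ r)
    (h : r * k + 1 < r * (k + 1) + 1) (f : Perm (Fin (r * (k + 1) + 1)) → M) :
    ∑ σ ∈ clusterSet r (k + 1), f σ = ∑ π ∈ clusterSet r k, ∑ v, f (insPerm h π v) := by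
  rw [clusterSet_succ_eq_image hr h, sum_image fun p _ q _ he =>
    Prod.ext_iff.2 (insPerm_injective h he), sum_product]

lemma card_clusterSet_succ (hr : 2 ≤ r) :
    #(clusterSet r (k + 1)) = (r * k + 1) * #(clusterSet r k) := by
  rw [card_eq_sum_ones, sum_clusterSet_succ hr (by nlinarith), card_eq_sum_ones, mul_sum]
  simp

lemma card_clusterSet_pos (hr : 2 ≤ r) : ∀ k, 0 < #(clusterSet r k)
  | 0 => by simp [clusterSet, IsCluster]
  | k + 1 => by
    rw [card_clusterSet_succ hr]
    exact Nat.mul_pos (Nat.succ_pos _) (card_clusterSet_pos hr k)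

def clusterDesSum (r k : ℕ) : ℕ := ∑ π ∈ clusterSet r k, desNum (r * k + 1) (ofPerm π)

lemma clusterDesSum_succ (hr : 2 ≤ r) :
    clusterDesSum r (k + 1) + clusterDesSum r k =
      (r * k + 1) * (clusterDesSum r k + #(clusterSet r k)) := by
  rw [clusterDesSum, clusterDesSum, sum_clusterSet_succ hr (by nlinarith), ← sum_add_distrib,
    card_eq_sum_ones, ← sum_add_distrib, mul_sum]
  exact sum_congr rfl fun π _ => sum_desNum_insPerm _ π

lemma clusterDesSum_mul (hr : 2 ≤ r) (hk : 1 ≤ k) :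
    (r + 1) * clusterDesSum r k = (r * k + 1) * #(clusterSet r k) := by
  induction k, hk using Nat.le_induction with
  | base =>
    have hS₀ : clusterDesSum r 0 = 0 := by simp [clusterDesSum, desNum]
    have hC₀ : #(clusterSet r 0) = 1 := by simp [clusterSet, IsCluster]
    have hS₁ := clusterDesSum_succ hr (k := 0)
    have hC₁ := card_clusterSet_succ hr (k := 0)
    rw [hS₀, hC₀] at hS₁
    rw [hC₀] at hC₁
    linear_combination (r + 1) * hS₁ - (r + 1) * hC₁
  | succ k _ ih =>
    linear_combination (r + 1) * clusterDesSum_succ hr (k := k) + (r * k) * ih -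
      (r * k + 1 + r) * card_clusterSet_succ hr (k := k)

end recursion

/-- the average number of descents over `π ∈ S_{rk+1}` with `π⁻¹` a
`2134⋯(r+1)`-cluster equals `(rk+1)/(r+1)`. -/
theorem stmt16 (r k : ℕ) (hr : 2 ≤ r) (hk : 1 ≤ k) :
    ((clusterSet r k).sum (fun π => (desNum (r * k + 1) (ofPerm π) : ℚ))) /
        ((clusterSet r k).card : ℚ)
      = ((r * k + 1 : ℕ) : ℚ) / ((r + 1 : ℕ) : ℚ) := by
  have hC : (#(clusterSet r k) : ℚ) ≠ 0 := by exact_mod_cast (card_clusterSet_pos hr k).ne'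
  rw [div_eq_div_iff hC (by positivity), ← Nat.cast_sum]
  exact_mod_cast (mul_comm _ _).trans (clusterDesSum_mul hr hk)
end
end
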